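/- arXiv:2406.04877 — 3 statements merged into one kernel-verified Lean document; each statement's English description precedes it below -/
import Mathlib

section
/- Let U be a countable set of vertices of a strongly connected directed graph D. Then for every vertex r of D there exist an in-arborescence and an out-arborescence in D, each rooted at r, that contain U and whose leaves are contained in U. -/
/-!
Common definitions: directed graphs as vertex/edge sets, directed paths and
walks, rays, arborescences, tree-like models and butterfly minors, laced
paths, knit rays, and the shapes (dominated directed rays, stars, combs,
chains of triangles) from the paper.
-/

universe u

/-- A directed graph on an ambient vertex type `V`, given by a set of vertices
and a set of directed edges (ordered pairs of vertices). -/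
structure DGraph (V : Type u) where
  verts : Set V
  edges : Set (V × V)

namespace DGraph

variable {V : Type u}

instance : Union (DGraph V) := ⟨fun G H => ⟨G.verts ∪ H.verts, G.edges ∪ H.edges⟩⟩
instance : Inter (DGraph V) := ⟨fun G H => ⟨G.verts ∩ H.verts, G.edges ∩ H.edges⟩⟩
instance : HasSubset (DGraph V) := ⟨fun H G => H.verts ⊆ G.verts ∧ H.edges ⊆ G.edges⟩
instance : EmptyCollection (DGraph V) := ⟨⟨∅, ∅⟩⟩

/-- The union of a family of directed graphs. -/
def iUnion {ι : Type} (f : ι → DGraph V) : DGraph V :=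
  ⟨⋃ i, (f i).verts, ⋃ i, (f i).edges⟩

/-- The directed graph obtained by reversing the orientation of every edge. -/
def reverse (G : DGraph V) : DGraph V := ⟨G.verts, {e | (e.2, e.1) ∈ G.edges}⟩

/-- The directed graph consisting of a single vertex and no edges. -/
def single (v : V) : DGraph V := ⟨{v}, ∅⟩

/-- Two vertices joined by both directed edges. -/
def linkBoth (a b : V) : DGraph V := ⟨{a, b}, {(a, b), (b, a)}⟩

/-- A directed triangle (directed cycle of length 3) on `a, b, c`. -/
def triangle (a b c : V) : DGraph V := ⟨{a, b, c}, {(a, b), (b, c), (c, a)}⟩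

/-- The directed graph of a list of vertices with its consecutive edges. -/
def ofList (l : List V) : DGraph V := ⟨{v | v ∈ l}, {e | e ∈ l.zip l.tail}⟩

/-- `𝒟(P)` for the (undirected) path `P` given by the list `l`:
the double path on `l`. -/
def doubleOfList (l : List V) : DGraph V := ofList l ∪ (ofList l).reverse

/-- The directed cycle through the vertices of `l` in order. -/
def cycleOfList (l : List V) : DGraph V :=
  ⟨{v | v ∈ l}, {e | e ∈ l.zip (l.tail ++ l.take 1)}⟩

/-- `G` is a directed cycle. -/
def IsDirectedCycle (G : DGraph V) : Prop :=
  ∃ l : List V, l.Nodup ∧ 2 ≤ l.length ∧ G = cycleOfList l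

/-- The out-oriented ray with vertices `f 0, f 1, …`, rooted at `f 0`. -/
def outRay (f : ℕ → V) : DGraph V :=
  ⟨Set.range f, {e | ∃ n, e = (f n, f (n + 1))}⟩

/-- The in-oriented ray with vertices `f 0, f 1, …`, rooted at `f 0`. -/
def inRay (f : ℕ → V) : DGraph V :=
  ⟨Set.range f, {e | ∃ n, e = (f (n + 1), f n)}⟩

/-- `𝒟(R)` for the undirected ray `R` with vertices `f 0, f 1, …`. -/
def doubleRay (f : ℕ → V) : DGraph V := outRay f ∪ inRay f

/-- The dominated directed ray on an out-oriented ray: the out-oriented ray `f`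
rooted at `f 0` together with the edges `(f (n+1), f 0)`. -/
def domOutRay (f : ℕ → V) : DGraph V :=
  ⟨Set.range f, {e | ∃ n, e = (f n, f (n + 1))} ∪ {e | ∃ n, e = (f (n + 1), f 0)}⟩

/-- The dominated directed ray on an in-oriented ray: the in-oriented ray `f`
rooted at `f 0` together with the edges `(f 0, f (n+1))`. -/
def domInRay (f : ℕ → V) : DGraph V :=
  ⟨Set.range f, {e | ∃ n, e = (f (n + 1), f n)} ∪ {e | ∃ n, e = (f 0, f (n + 1))}⟩

/-- `G` is a dominated directed ray. -/
def IsDominatedDirectedRay (G : DGraph V) : Prop :=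
  ∃ f : ℕ → V, Function.Injective f ∧ (G = domOutRay f ∨ G = domInRay f)

/-- The internal vertices of a path or walk given as a list. -/
def internals (l : List V) : List V := l.tail.dropLast

/-- `l` is a directed path in `G`. -/
def IsPath (G : DGraph V) (l : List V) : Prop :=
  l ≠ [] ∧ l.Nodup ∧ (∀ v ∈ l, v ∈ G.verts) ∧ ∀ e ∈ l.zip l.tail, e ∈ G.edges

/-- `l` is a directed path in `G` with startvertex `a` and endvertex `b`. -/
def IsPathFrom (G : DGraph V) (a b : V) (l : List V) : Prop :=
  IsPath G l ∧ l.head? = some a ∧ l.getLast? = some b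

/-- There is a directed `a`–`b` path in `G`. -/
def Reaches (G : DGraph V) (a b : V) : Prop := ∃ l, IsPathFrom G a b l

/-- `G` is strongly connected. -/
def StronglyConnected (G : DGraph V) : Prop :=
  ∀ a ∈ G.verts, ∀ b ∈ G.verts, Reaches G a b

/-- `l` is a directed `X`–`Y` path in `G`: it starts in `X`, ends in `Y` and
has no internal vertex in `X ∪ Y`. -/
def IsXYPath (G : DGraph V) (X Y : Set V) (l : List V) : Prop :=
  IsPath G l ∧ (∃ a ∈ X, l.head? = some a) ∧ (∃ b ∈ Y, l.getLast? = some b) ∧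
    ∀ v ∈ internals l, v ∉ X ∪ Y

/-- `T` is an in-arborescence rooted at `r`: its underlying graph is a tree
and all edges are directed towards the root `r`. -/
def IsInArborescence (T : DGraph V) (r : V) : Prop :=
  r ∈ T.verts ∧ (∀ e ∈ T.edges, e.1 ∈ T.verts ∧ e.2 ∈ T.verts) ∧
  (∀ w, (r, w) ∉ T.edges) ∧ (∀ v ∈ T.verts, v ≠ r → ∃! w, (v, w) ∈ T.edges) ∧
  (∀ v ∈ T.verts, Reaches T v r)

/-- `T` is an out-arborescence rooted at `r`. -/
def IsOutArborescence (T : DGraph V) (r : V) : Prop := IsInArborescence T.reverse r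

/-- `v` is a leaf of the in-arborescence `T` rooted at `r`. -/
def IsLeafOfInArb (T : DGraph V) (r v : V) : Prop :=
  v ∈ T.verts ∧ v ≠ r ∧ ∀ u, (u, v) ∉ T.edges

/-- `v` is a leaf of the out-arborescence `T` rooted at `r`. -/
def IsLeafOfOutArb (T : DGraph V) (r v : V) : Prop := IsLeafOfInArb T.reverse r v

/-- A tree-like model of `H` in `D`; every vertex of `H` is identified with the
common root of the in- and out-arborescence of its branch set. -/
structure TreeLikeModel (D H : DGraph V) where
  bag : V → DGraph V
  tin : V → DGraph V
  tout : V → DGraph V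
  emap : V × V → V × V
  bag_sub : ∀ v ∈ H.verts, bag v ⊆ D
  bag_disjoint : ∀ v ∈ H.verts, ∀ w ∈ H.verts, v ≠ w → (bag v).verts ∩ (bag w).verts = ∅
  bag_eq : ∀ v ∈ H.verts, bag v = tin v ∪ tout v
  tin_arb : ∀ v ∈ H.verts, IsInArborescence (tin v) v
  tout_arb : ∀ v ∈ H.verts, IsOutArborescence (tout v) v
  roots_eq : ∀ v ∈ H.verts, (tin v).verts ∩ (tout v).verts = {v}
  emap_mem : ∀ e ∈ H.edges, emap e ∈ D.edges
  emap_tail : ∀ e ∈ H.edges, (emap e).1 ∈ (tout e.1).verts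
  emap_head : ∀ e ∈ H.edges, (emap e).2 ∈ (tin e.2).verts

/-- `H` is a butterfly minor of `D`. -/
def IsButterflyMinor (D H : DGraph V) : Prop := Nonempty (TreeLikeModel D H)

/-- `G` is a double path (`𝒟(P)` for an undirected path `P`) with endpoints
`a` and `b`. -/
def IsDoublePath (G : DGraph V) (a b : V) : Prop :=
  ∃ l : List V, l.Nodup ∧ l.head? = some a ∧ l.getLast? = some b ∧ G = doubleOfList l

/-- `G = 𝒟(S)` for a subdivided star `S` with infinitely many leaves, with
centre `c` and branches `q n`; `teeth` is the set of leaves of `S`. -/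
def IsDSubdividedStar (G : DGraph V) (teeth : Set V) : Prop :=
  ∃ (c : V) (q : ℕ → List V),
    (∀ n, (q n).Nodup ∧ (q n).head? = some c ∧ 2 ≤ (q n).length) ∧
    (∀ m n, m ≠ n → ∀ v, v ∈ q m → v ∈ q n → v = c) ∧
    G = iUnion (fun n => doubleOfList (q n)) ∧
    teeth = {v | ∃ n, (q n).getLast? = some v}

/-- `G` is obtained from `𝒟(S)` for a subdivided star `S` by replacing the
centre of infinite degree by a dominated directed ray. -/
def IsRayCentreStar (G : DGraph V) (teeth : Set V) : Prop :=
  ∃ (f : ℕ → V) (R : DGraph V) (g : ℕ → V) (q : ℕ → List V),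
    Function.Injective f ∧ (R = domOutRay f ∨ R = domInRay f) ∧
    (∀ n, (q n).Nodup ∧ (q n).head? = some (g n)) ∧
    (∀ n, ∀ v ∈ q n, v ∉ Set.range f) ∧
    (∀ m n, m ≠ n → ∀ v ∈ q m, v ∉ q n) ∧
    G = R ∪ iUnion (fun n => doubleOfList (q n) ∪ linkBoth (f n) (g n)) ∧
    teeth = {v | ∃ n, (q n).getLast? = some v}

/-- `G` is shaped by a star, with set of teeth `teeth`. -/
def IsShapedByStar (G : DGraph V) (teeth : Set V) : Prop :=
  (IsDominatedDirectedRay G ∧ teeth = G.verts) ∨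
  IsDSubdividedStar G teeth ∨ IsRayCentreStar G teeth

/-- `G = 𝒟(C)` for a comb `C` with spine `f`, branches `q n` attached at
`f (α n)`; `teeth` is the set of teeth of `C`. -/
def IsDComb (G : DGraph V) (teeth : Set V) : Prop :=
  ∃ (f : ℕ → V) (α : ℕ → ℕ) (q : ℕ → List V),
    Function.Injective f ∧ Function.Injective α ∧
    (∀ n, (q n).Nodup ∧ (q n).head? = some (f (α n))) ∧
    (∀ n, ∀ v ∈ (q n).tail, v ∉ Set.range f) ∧
    (∀ m n, m ≠ n → ∀ v ∈ q m, v ∉ q n) ∧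
    G = doubleRay f ∪ iUnion (fun n => doubleOfList (q n)) ∧
    teeth = {v | ∃ n, (q n).getLast? = some v}

/-- The double path on `l` together with both edges between `b` and the first
vertex of `l` (empty if `l` is empty). -/
def branchGraph (b : V) (l : List V) : DGraph V :=
  match l with
  | [] => ∅
  | h :: _ => doubleOfList l ∪ linkBoth b h

/-- `G` is obtained from `𝒟(C)` for a comb `C` by replacing each junction of
`C` by a directed cycle of length 3 as described in the paper.  Position `k`
of the spine is replaced by the piece `S k` (a single vertex, or a directed
triangle at junctions), with `L k`, `R k`, `B k` the vertices of `S k` to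
which the left spine part, the right spine part and the branch attach, and
`t n` the tooth of branch `n`. -/
def IsTriangleComb (G : DGraph V) (teeth : Set V) : Prop :=
  ∃ (α : ℕ → ℕ) (q : ℕ → List V) (S : ℕ → DGraph V) (L R B : ℕ → V) (t : ℕ → V),
    Function.Injective α ∧
    (∀ j k, j ≠ k → (S j).verts ∩ (S k).verts = ∅) ∧
    (∀ n, (q n).Nodup) ∧
    (∀ m n, m ≠ n → ∀ v ∈ q m, v ∉ q n) ∧
    (∀ n, ∀ v ∈ q n, ∀ k, v ∉ (S k).verts) ∧
    (∀ k, L k ∈ (S k).verts ∧ R k ∈ (S k).verts ∧ B k ∈ (S k).verts) ∧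
    (∀ k, (¬ ∃ n, α n = k ∧ 1 ≤ k) → ∃ v, S k = single v) ∧
    (∀ n, 1 ≤ α n → ∃ a b c, a ≠ b ∧ b ≠ c ∧ a ≠ c ∧ S (α n) = triangle a b c) ∧
    (∀ n, 1 ≤ α n → q n ≠ [] →
      L (α n) ≠ R (α n) ∧ L (α n) ≠ B (α n) ∧ R (α n) ≠ B (α n)) ∧
    (∀ n, 1 ≤ α n → q n = [] →
      t n ∈ (S (α n)).verts ∧ L (α n) ≠ R (α n) ∧ t n ≠ L (α n) ∧ t n ≠ R (α n)) ∧
    (∀ n, q n ≠ [] → (q n).getLast? = some (t n)) ∧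
    (∀ n, α n = 0 → q n = [] → t n ∈ (S 0).verts) ∧
    G = iUnion S ∪ iUnion (fun k => linkBoth (R k) (L (k + 1))) ∪
        iUnion (fun n => branchGraph (B (α n)) (q n)) ∧
    teeth = Set.range t

/-- `G` is shaped by a comb, with set of teeth `teeth`. -/
def IsShapedByComb (G : DGraph V) (teeth : Set V) : Prop :=
  IsDComb G teeth ∨ IsTriangleComb G teeth

/-- The core of a chain of triangles: triangles `a i, b i, c i` together with
the edges `(a (i+1), a i)` and `(c i, c (i+1))`. -/
def chainCore (a b c : ℕ → V) : DGraph V :=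
  ⟨Set.range a ∪ Set.range b ∪ Set.range c,
   {e | ∃ i, e = (a i, b i) ∨ e = (b i, c i) ∨ e = (c i, a i) ∨
        e = (a (i + 1), a i) ∨ e = (c i, c (i + 1))}⟩

/-- `G` is a chain of triangles with set of teeth `teeth`. -/
def IsChainOfTriangles (G : DGraph V) (teeth : Set V) : Prop :=
  ∃ (a b c : ℕ → V) (q : ℕ → List V),
    (Function.Injective fun p : ℕ × Fin 3 => ![a, b, c] p.2 p.1) ∧
    (∀ i, (q i).Nodup ∧ (q i).head? = some (b i)) ∧
    (∀ i, ∀ v ∈ (q i).tail, ∀ j, v ≠ a j ∧ v ≠ b j ∧ v ≠ c j) ∧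
    (∀ i j, i ≠ j → ∀ v ∈ q i, v ∉ q j) ∧
    G = chainCore a b c ∪ iUnion (fun i => doubleOfList (q i)) ∧
    teeth = {v | ∃ i, (q i).getLast? = some v}

/-- `G` is a subdivided in-star with centre (root) `c` and all edges directed
towards `c`; it has infinitely many leaves and `teeth` is its set of leaves. -/
def IsSubdividedInStar (G : DGraph V) (teeth : Set V) : Prop :=
  ∃ (c : V) (q : ℕ → List V),
    (∀ n, (q n).Nodup ∧ (q n).getLast? = some c ∧ 2 ≤ (q n).length) ∧
    (∀ m n, m ≠ n → ∀ v, v ∈ q m → v ∈ q n → v = c) ∧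
    G = iUnion (fun n => ofList (q n)) ∧
    teeth = {v | ∃ n, (q n).head? = some v}

/-- `G` is a subdivided out-star. -/
def IsSubdividedOutStar (G : DGraph V) (teeth : Set V) : Prop :=
  IsSubdividedInStar G.reverse teeth

/-- `G = 𝒟(K_{1,∞})`. -/
def IsDInfiniteStar (G : DGraph V) : Prop :=
  ∃ (c : V) (g : ℕ → V), Function.Injective g ∧ (∀ n, g n ≠ c) ∧
    G = ⟨insert c (Set.range g), {e | ∃ n, e = (c, g n) ∨ e = (g n, c)}⟩

/-- `G = 𝒟(R)` for an undirected ray `R`. -/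
def IsDoubleRayGraph (G : DGraph V) : Prop :=
  ∃ f : ℕ → V, Function.Injective f ∧ G = doubleRay f

/-- `G` is a subdivision of a dominated directed ray (parallel edges being
collapsed): the ray `f`, its original vertices sitting at the positions
`α n ≥ 1`, and for each `n` a subdivided dominating edge `p n`. -/
def IsSubdivDominatedRay (G : DGraph V) : Prop :=
  (∃ (f : ℕ → V) (α : ℕ → ℕ) (p : ℕ → List V),
    Function.Injective f ∧ StrictMono α ∧ (∀ n, 1 ≤ α n) ∧
    (∀ n, (p n).Nodup ∧ (p n).head? = some (f (α n)) ∧ (p n).getLast? = some (f 0) ∧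
      2 ≤ (p n).length) ∧
    (∀ n, ∀ v ∈ internals (p n), v ∉ Set.range f) ∧
    (∀ m n, m ≠ n → ∀ v ∈ internals (p m), v ∉ p n) ∧
    G = outRay f ∪ iUnion (fun n => ofList (p n))) ∨
  (∃ (f : ℕ → V) (α : ℕ → ℕ) (p : ℕ → List V),
    Function.Injective f ∧ StrictMono α ∧ (∀ n, 1 ≤ α n) ∧
    (∀ n, (p n).Nodup ∧ (p n).head? = some (f 0) ∧ (p n).getLast? = some (f (α n)) ∧
      2 ≤ (p n).length) ∧
    (∀ n, ∀ v ∈ internals (p n), v ∉ Set.range f) ∧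
    (∀ m n, m ≠ n → ∀ v ∈ internals (p m), v ∉ p n) ∧
    G = inRay f ∪ iUnion (fun n => ofList (p n)))

section Laced

variable [DecidableEq V]

/-- The segment of the path `l` from `x` to `y` (inclusive). -/
def seg (l : List V) (x y : V) : List V :=
  (l.drop (l.idxOf x)).take (l.idxOf y + 1 - l.idxOf x)

/-- `x ≤ y` along the path `l`. -/
def leIn (l : List V) (x y : V) : Prop :=
  x ∈ l ∧ y ∈ l ∧ l.idxOf x ≤ l.idxOf y

/-- `x < y` along the path `l`. -/
def ltIn (l : List V) (x y : V) : Prop :=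
  x ∈ l ∧ y ∈ l ∧ l.idxOf x < l.idxOf y

/-- The directed paths `P` and `Q` are laced. -/
def Laced (P Q : List V) : Prop :=
  (∀ v ∈ P, v ∉ Q) ∨
  ∃ (ℓ : ℕ) (x y : ℕ → V), 1 ≤ ℓ ∧
    (∀ i, 1 ≤ i → i ≤ ℓ → leIn P (x i) (y i) ∧ leIn Q (x i) (y i)) ∧
    (∀ i, 1 ≤ i → i < ℓ → ltIn P (y i) (x (i + 1)) ∧ ltIn Q (y (i + 1)) (x i)) ∧
    (∀ i, 1 ≤ i → i ≤ ℓ → seg P (x i) (y i) = seg Q (x i) (y i)) ∧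
    (∀ i, 1 ≤ i → i < ℓ → ∀ v ∈ internals (seg Q (y (i + 1)) (x i)), v ∉ P) ∧
    (∀ v ∈ Q.take (Q.idxOf (x ℓ) + 1), v ∈ P → v = x ℓ) ∧
    (∀ v ∈ Q.drop (Q.idxOf (y 1)), v ∈ P → v = y 1)

end Laced

/-- The out-ray `f` and the in-ray `g` with common root are knit:
`x i = f (p i) = g (p' i)` and `y i = f (q i) = g (q' i)` are the shared
segments, in the orders required in the paper. -/
def Knit (f g : ℕ → V) : Prop :=
  f 0 = g 0 ∧
  ∃ p q p' q' : ℕ → ℕ,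
    (∀ i, 0 < p i ∧ p i ≤ q i ∧ q i < p (i + 1)) ∧
    (∀ i, 0 < q' i ∧ q' i ≤ p' i ∧ p' i < q' (i + 1)) ∧
    (∀ i, q i - p i = p' i - q' i) ∧
    (∀ i, ∀ k ≤ q i - p i, f (p i + k) = g (p' i - k)) ∧
    (∀ i, ∀ m, p' i < m → m < q' (i + 1) → g m ∉ Set.range f) ∧
    (∀ m, 0 < m → m < q' 0 → g m ∉ Set.range f)

section Contract

variable [DecidableEq V]

/-- The map identifying `v` with `u`. -/
def contractFun (u v : V) : V → V := fun x => if x = v then u else x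

/-- Contracting the edge `(u, v)` of `G` onto the vertex `u`. -/
def contractEdge (G : DGraph V) (u v : V) : DGraph V :=
  ⟨contractFun u v '' G.verts,
   {e | e ≠ (u, u) ∧ ∃ e' ∈ G.edges, e = (contractFun u v e'.1, contractFun u v e'.2)}⟩

end Contract

/-- The edge `(u, v)` of `G` is butterfly contractible. -/
def IsButterflyContractibleEdge (G : DGraph V) (u v : V) : Prop :=
  (u, v) ∈ G.edges ∧
  ((∀ w, (u, w) ∈ G.edges → w = v) ∨ (∀ w, (w, v) ∈ G.edges → w = u))

/-- `G` and `H` are isomorphic directed graphs. -/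
def Isom (G H : DGraph V) : Prop :=
  ∃ φ : V → V, Set.BijOn φ G.verts H.verts ∧
    ∀ u ∈ G.verts, ∀ v ∈ G.verts, ((u, v) ∈ G.edges ↔ (φ u, φ v) ∈ H.edges)

end DGraph

/-!
Zorn's lemma, applied to the in-arborescences `T ⊆ D` rooted at `r` whose leaves lie in `U`,
ordered by inclusion: the union of a chain of them is again one, and a maximal one contains
`U`. Indeed, a vertex `u ∈ U` outside `T` can be attached along a `u`–`r` path of `D`, vertex
by vertex backwards from the point where the path first enters `T`; this makes `u` the only new
leaf. Out-arborescences are the in-arborescences of the reversed graph.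
-/

theorem List.isChain_iff_forall_mem_zip_tail {α : Type*} {R : α → α → Prop} {l : List α} :
    l.IsChain R ↔ ∀ e ∈ l.zip l.tail, R e.1 e.2 := by
  induction l with
  | nil => simp
  | cons a l ih =>
    cases l with
    | nil => simp
    | cons b l => simp_all [List.isChain_cons_cons]

namespace DGraph

variable {V : Type u}

theorem subset_refl (G : DGraph V) : G ⊆ G := ⟨subset_rfl, subset_rfl⟩

theorem subset_trans {G H K : DGraph V} (hGH : G ⊆ H) (hHK : H ⊆ K) : G ⊆ K :=
  ⟨hGH.1.trans hHK.1, hGH.2.trans hHK.2⟩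

instance : Std.Refl (α := DGraph V) (· ⊆ ·) := ⟨subset_refl⟩

theorem reverse_subset_reverse {G H : DGraph V} (h : G ⊆ H) : G.reverse ⊆ H.reverse :=
  ⟨h.1, fun _ he => h.2 he⟩

theorem isPath_iff_isChain {G : DGraph V} {l : List V} :
    IsPath G l ↔ l ≠ [] ∧ l.Nodup ∧ (∀ v ∈ l, v ∈ G.verts) ∧
      l.IsChain (fun a b => (a, b) ∈ G.edges) := by
  simp only [IsPath, List.isChain_iff_forall_mem_zip_tail]

theorem IsPath.mono {G H : DGraph V} {l : List V} (hGH : G ⊆ H) (h : IsPath G l) : IsPath H l :=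
  ⟨h.1, h.2.1, fun v hv => hGH.1 (h.2.2.1 v hv), fun e he => hGH.2 (h.2.2.2 e he)⟩

theorem IsPathFrom.mono {G H : DGraph V} {a b : V} {l : List V} (hGH : G ⊆ H)
    (h : IsPathFrom G a b l) : IsPathFrom H a b l :=
  ⟨h.1.mono hGH, h.2⟩

theorem Reaches.mono {G H : DGraph V} {a b : V} (hGH : G ⊆ H) (h : Reaches G a b) :
    Reaches H a b :=
  let ⟨l, hl⟩ := h
  ⟨l, hl.mono hGH⟩

theorem Reaches.refl {G : DGraph V} {v : V} (hv : v ∈ G.verts) : Reaches G v v :=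
  ⟨[v], ⟨List.cons_ne_nil v [], List.nodup_singleton v, by simpa using hv, by simp⟩, rfl, rfl⟩

theorem IsPath.reverse {G : DGraph V} {l : List V} (h : IsPath G l) :
    IsPath G.reverse l.reverse := by
  obtain ⟨hne, hnd, hverts, hchain⟩ := isPath_iff_isChain.1 h
  exact isPath_iff_isChain.2 ⟨by simpa using hne, List.nodup_reverse.2 hnd,
    fun v hv => hverts v (List.mem_reverse.1 hv), List.isChain_reverse.2 hchain⟩

theorem Reaches.reverse {G : DGraph V} {a b : V} (h : Reaches G a b) : Reaches G.reverse b a :=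
  let ⟨l, hl, hhead, hlast⟩ := h
  ⟨l.reverse, hl.reverse, by rwa [List.head?_reverse], by rwa [List.getLast?_reverse]⟩

theorem StronglyConnected.reverse {G : DGraph V} (h : StronglyConnected G) :
    StronglyConnected G.reverse :=
  fun a ha b hb => (h b hb a ha).reverse

theorem IsPathFrom.cons {G : DGraph V} {v w x : V} {l : List V} (h : IsPathFrom G w x l)
    (hvw : (v, w) ∈ G.edges) (hv : v ∈ G.verts) (hvl : v ∉ l) : IsPathFrom G v x (v :: l) := by
  obtain ⟨⟨hne, hnd, hverts, hedges⟩, hhead, hlast⟩ := h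
  obtain ⟨l, rfl⟩ : ∃ l', l = w :: l' := by
    cases l with
    | nil => exact absurd rfl hne
    | cons w' l' => exact ⟨l', by simpa using hhead⟩
  refine ⟨⟨List.cons_ne_nil _ _, List.nodup_cons.2 ⟨hvl, hnd⟩, ?_, ?_⟩, rfl, ?_⟩
  · simpa [hv] using hverts
  · simpa [hvw] using hedges
  · simpa using hlast

theorem IsPathFrom.of_cons_cons {G : DGraph V} {v v' w x : V} {l : List V}
    (h : IsPathFrom G v x (v' :: w :: l)) :
    IsPathFrom G w x (w :: l) ∧ (v, w) ∈ G.edges ∧ v ∉ w :: l := by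
  obtain ⟨⟨-, hnd, hverts, hedges⟩, hhead, hlast⟩ := h
  obtain rfl : v' = v := by simpa using hhead
  refine ⟨⟨⟨List.cons_ne_nil _ _, hnd.of_cons, fun u hu => hverts u (.tail _ hu),
    fun e he => hedges e (.tail _ he)⟩, rfl, by simpa using hlast⟩,
    hedges _ (.head _), (List.nodup_cons.1 hnd).1⟩

def attach (T : DGraph V) (v w : V) : DGraph V := ⟨insert v T.verts, insert (v, w) T.edges⟩

theorem subset_attach (T : DGraph V) (v w : V) : T ⊆ T.attach v w :=
  ⟨Set.subset_insert _ _, Set.subset_insert _ _⟩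

theorem attach_subset {T D : DGraph V} {v w : V} (hTD : T ⊆ D) (hv : v ∈ D.verts)
    (hvw : (v, w) ∈ D.edges) : T.attach v w ⊆ D :=
  ⟨Set.insert_subset hv hTD.1, Set.insert_subset hvw hTD.2⟩

theorem isInArborescence_single (r : V) : IsInArborescence (single r) r :=
  ⟨rfl, fun _ he => he.elim, fun _ he => he.elim, fun _ hv hvr => absurd hv hvr,
    fun _ hv => hv ▸ Reaches.refl rfl⟩

theorem IsInArborescence.attach {T : DGraph V} {r v w : V} (hT : IsInArborescence T r)
    (hv : v ∉ T.verts) (hw : w ∈ T.verts) : IsInArborescence (T.attach v w) r := by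
  obtain ⟨hr, hends, hroot, hout, hreach⟩ := hT
  have hvr : v ≠ r := fun h => hv (h ▸ hr)
  refine ⟨Or.inr hr, ?_, ?_, ?_, ?_⟩
  · rintro e (rfl | he)
    · exact ⟨Or.inl rfl, Or.inr hw⟩
    · exact ⟨Or.inr (hends e he).1, Or.inr (hends e he).2⟩
  · rintro w' (he | he)
    · exact hvr (Prod.ext_iff.1 he).1.symm
    · exact hroot w' he
  · rintro u (rfl | hu) hur
    · refine ⟨w, Or.inl rfl, fun w' => ?_⟩
      rintro (he | he)
      · exact (Prod.ext_iff.1 he).2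
      · exact absurd (hends _ he).1 hv
    · obtain ⟨w₀, hw₀, huniq⟩ := hout u hu hur
      refine ⟨w₀, Or.inr hw₀, fun w' => ?_⟩
      rintro (he | he)
      · obtain rfl : u = v := (Prod.ext_iff.1 he).1
        exact absurd hu hv
      · exact huniq w' he
  · rintro u (rfl | hu)
    · obtain ⟨l, hl⟩ := hreach w hw
      have hvl : u ∉ l := fun h => hv (hl.1.2.2.1 u h)
      exact ⟨u :: l, (hl.mono (subset_attach T u w)).cons (Or.inl rfl) (Or.inl rfl) hvl⟩
    · exact (hreach u hu).mono (subset_attach T v w)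

theorem IsLeafOfInArb.of_subset {T T' : DGraph V} {r u : V} (hTT' : T ⊆ T')
    (h : IsLeafOfInArb T' r u) (hu : u ∈ T.verts) : IsLeafOfInArb T r u :=
  ⟨hu, h.2.1, fun x hx => h.2.2 x (hTT'.2 hx)⟩

theorem IsLeafOfInArb.of_attach {T : DGraph V} {r u v w : V}
    (h : IsLeafOfInArb (T.attach v w) r u) : u = v ∨ (IsLeafOfInArb T r u ∧ u ≠ w) := by
  by_cases huv : u = v
  · exact Or.inl huv
  have hu : u ∈ T.verts := h.1.resolve_left huv
  refine Or.inr ⟨h.of_subset (subset_attach T v w) hu, ?_⟩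
  rintro rfl
  exact h.2.2 v (Or.inl rfl)

def sUnion (s : Set (DGraph V)) : DGraph V := ⟨⋃ T ∈ s, T.verts, ⋃ T ∈ s, T.edges⟩

theorem subset_sUnion {s : Set (DGraph V)} {T : DGraph V} (hT : T ∈ s) : T ⊆ sUnion s :=
  ⟨Set.subset_biUnion_of_mem (u := fun T : DGraph V => T.verts) hT,
    Set.subset_biUnion_of_mem (u := fun T : DGraph V => T.edges) hT⟩

theorem sUnion_subset {s : Set (DGraph V)} {D : DGraph V} (h : ∀ T ∈ s, T ⊆ D) : sUnion s ⊆ D :=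
  ⟨Set.iUnion₂_subset fun T hT => (h T hT).1, Set.iUnion₂_subset fun T hT => (h T hT).2⟩

theorem IsInArborescence.sUnion {s : Set (DGraph V)} {r : V} (hne : s.Nonempty)
    (hdir : DirectedOn (· ⊆ ·) s) (h : ∀ T ∈ s, IsInArborescence T r) :
    IsInArborescence (sUnion s) r := by
  obtain ⟨T₀, hT₀⟩ := hne
  refine ⟨(subset_sUnion hT₀).1 (h T₀ hT₀).1, ?_, ?_, ?_, ?_⟩
  · intro e he
    obtain ⟨T, hT, he⟩ := Set.mem_iUnion₂.1 he
    exact ⟨(subset_sUnion hT).1 ((h T hT).2.1 e he).1, (subset_sUnion hT).1 ((h T hT).2.1 e he).2⟩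
  · intro w he
    obtain ⟨T, hT, he⟩ := Set.mem_iUnion₂.1 he
    exact (h T hT).2.2.1 w he
  · intro v hv hvr
    obtain ⟨T, hT, hv⟩ := Set.mem_iUnion₂.1 hv
    obtain ⟨w, hw, -⟩ := (h T hT).2.2.2.1 v hv hvr
    refine ⟨w, (subset_sUnion hT).2 hw, fun w' hw' => ?_⟩
    obtain ⟨T', hT', hw'⟩ := Set.mem_iUnion₂.1 hw'
    obtain ⟨T'', hT'', hTT'', hT'T''⟩ := hdir T hT T' hT'
    exact ((h T'' hT'').2.2.2.1 v (hTT''.1 hv) hvr).unique (hT'T''.2 hw') (hTT''.2 hw)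
  · intro v hv
    obtain ⟨T, hT, hv⟩ := Set.mem_iUnion₂.1 hv
    exact ((h T hT).2.2.2.2 v hv).mono (subset_sUnion hT)

theorem exists_extend_along_path {D T : DGraph V} {r x : V} {U : Set V} (hTD : T ⊆ D)
    (hT : IsInArborescence T r) (hleaf : {v | IsLeafOfInArb T r v} ⊆ U) (hx : x ∈ T.verts) :
    ∀ (l : List V) (v : V), IsPathFrom D v x l →
      ∃ T', T ⊆ T' ∧ T' ⊆ D ∧ IsInArborescence T' r ∧ v ∈ T'.verts ∧
        {u | IsLeafOfInArb T' r u} ⊆ insert v U ∧ T'.verts ⊆ T.verts ∪ {u | u ∈ l} := by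
  -- The induction stops at the first vertex of the path in `T`; the last conjunct guarantees
  -- that the vertex attached next is new.
  intro l
  induction l with
  | nil => exact fun v h => absurd rfl h.1.1
  | cons v' l ih =>
    intro v h
    obtain rfl : v = v' := (by simpa using h.2.1 : v' = v).symm
    by_cases hvT : v ∈ T.verts
    · exact ⟨T, subset_refl T, hTD, hT, hvT, hleaf.trans (Set.subset_insert v U),
        Set.subset_union_left⟩
    cases l with
    | nil =>
      obtain rfl : v = x := by simpa using h.2.2
      exact absurd hx hvT
    | cons w l =>
      obtain ⟨hw, hvw, hvl⟩ := h.of_cons_cons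
      obtain ⟨T', hTT', hT'D, hT', hwT', hleaf', hverts'⟩ := ih w hw
      have hvT' : v ∉ T'.verts := fun h => (hverts' h).elim hvT hvl
      refine ⟨T'.attach v w, subset_trans hTT' (subset_attach T' v w),
        attach_subset hT'D (h.1.2.2.1 v List.mem_cons_self) hvw, hT'.attach hvT' hwT',
        Or.inl rfl, ?_, ?_⟩
      · intro u hu
        rcases hu.of_attach with rfl | ⟨hu', huw⟩
        · exact Set.mem_insert u U
        · exact Or.inr ((hleaf' hu').resolve_left huw)
      · rintro u (rfl | hu)
        · exact Or.inr List.mem_cons_self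
        · rcases hverts' hu with hu | hu
          · exact Or.inl hu
          · exact Or.inr (List.mem_cons_of_mem _ hu)

theorem exists_inArborescence {D : DGraph V} (hD : StronglyConnected D) {U : Set V}
    (hUD : U ⊆ D.verts) {r : V} (hr : r ∈ D.verts) :
    ∃ T : DGraph V, T ⊆ D ∧ IsInArborescence T r ∧ U ⊆ T.verts ∧
      {v | IsLeafOfInArb T r v} ⊆ U := by
  let Admissible := {T : DGraph V // T ⊆ D ∧ IsInArborescence T r ∧ {v | IsLeafOfInArb T r v} ⊆ U}
  have : Nonempty Admissible := ⟨⟨single r, ⟨by simpa [single] using hr, fun _ he => he.elim⟩,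
    isInArborescence_single r, fun _ hv => absurd hv.1 hv.2.1⟩⟩
  have hchain : ∀ c : Set Admissible, IsChain (fun T T' : Admissible => T.1 ⊆ T'.1) c → c.Nonempty →
      ∃ ub : Admissible, ∀ T ∈ c, T.1 ⊆ ub.1 := by
    intro c hc hne
    have hdir : DirectedOn (· ⊆ ·) (Subtype.val '' c) :=
      (hc.image_of_map_rel _ _ Subtype.val fun _ _ h => h).directedOn
    refine ⟨⟨sUnion (Subtype.val '' c), sUnion_subset ?_, ?_, ?_⟩,
      fun T hT => subset_sUnion ⟨T, hT, rfl⟩⟩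
    · rintro _ ⟨T, -, rfl⟩
      exact T.2.1
    · exact IsInArborescence.sUnion (hne.image _) hdir fun _ ⟨T, _, hT⟩ => hT ▸ T.2.2.1
    · intro v hv
      obtain ⟨_, ⟨T, hT, rfl⟩, hvT⟩ := Set.mem_iUnion₂.1 hv.1
      exact T.2.2.2 (hv.of_subset (subset_sUnion (Set.mem_image_of_mem _ hT)) hvT)
  obtain ⟨⟨T, hTD, hT, hleaf⟩, hmax⟩ :=
    exists_maximal_of_nonempty_chains_bounded hchain (fun h h' => subset_trans h h')
  refine ⟨T, hTD, hT, fun u hu => ?_, hleaf⟩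
  obtain ⟨l, hl⟩ := hD u (hUD hu) r hr
  obtain ⟨T', hTT', hT'D, hT', huT', hleaf', -⟩ := exists_extend_along_path hTD hT hleaf hT.1 l u hl
  rw [Set.insert_eq_of_mem hu] at hleaf'
  exact (hmax ⟨T', hT'D, hT', hleaf'⟩ hTT').1 huT'

end DGraph

theorem spanning_arborescences_general {V : Type u} (D : DGraph V)
    (hD : D.StronglyConnected) (U : Set V) (hUD : U ⊆ D.verts)
    (r : V) (hr : r ∈ D.verts) :
    (∃ T : DGraph V, T ⊆ D ∧ DGraph.IsInArborescence T r ∧ U ⊆ T.verts ∧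
      {v | DGraph.IsLeafOfInArb T r v} ⊆ U) ∧
    (∃ T : DGraph V, T ⊆ D ∧ DGraph.IsOutArborescence T r ∧ U ⊆ T.verts ∧
      {v | DGraph.IsLeafOfOutArb T r v} ⊆ U) := by
  refine ⟨DGraph.exists_inArborescence hD hUD hr, ?_⟩
  obtain ⟨T, hTD, hT, hUT, hleaf⟩ := DGraph.exists_inArborescence hD.reverse hUD hr
  exact ⟨T.reverse, DGraph.reverse_subset_reverse hTD, hT, hUT, hleaf⟩

/-- Let `U` be a countable set of vertices of a strongly
connected directed graph `D`.  Then for every vertex `r` of `D` there exist an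
in-arborescence and an out-arborescence in `D`, each rooted at `r`, that
contain `U` and whose leaves are contained in `U`. -/
theorem spanning_arborescences {V : Type u} (D : DGraph V)
    (hD : D.StronglyConnected) (U : Set V) (hUD : U ⊆ D.verts)
    (hU : U.Countable) (r : V) (hr : r ∈ D.verts) :
    (∃ T : DGraph V, T ⊆ D ∧ DGraph.IsInArborescence T r ∧ U ⊆ T.verts ∧
      {v | DGraph.IsLeafOfInArb T r v} ⊆ U) ∧
    (∃ T : DGraph V, T ⊆ D ∧ DGraph.IsOutArborescence T r ∧ U ⊆ T.verts ∧
      {v | DGraph.IsLeafOfOutArb T r v} ⊆ U) :=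
  spanning_arborescences_general D hD U hUD r hr
end

section
/- Let D be a directed graph and let a, b be vertices of D. Let P be a directed a–b path and Q a directed b–a path in D such that P and Q are laced. Then the union P ∪ Q has a butterfly minor that is a double path with endpoints a and b. -/
/-!
Common definitions: directed graphs as vertex/edge sets, directed paths and
walks, rays, arborescences, tree-like models and butterfly minors, laced
paths, knit rays, and the shapes (dominated directed rays, stars, combs,
chains of triangles) from the paper.
-/

universe u

/-!
Write the common segments of `P` and `Q` as `x_i P y_i = x_i Q y_i` for `1 ≤ i ≤ ℓ`; the lacing
conditions force `y_1 = a` and `y_ℓ = b`, and the double path is `y_1, …, y_ℓ`. The branch set of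
`y_i` is the in-path along `Q` from just after `y_{i+1}` up to `y_i`, together with the out-path
along `P` from `y_i` up to just before `x_{i+1}`. Because `Q` avoids `P` between consecutive
common segments, a vertex of the in-path of `y_i` that lies on `P` lies on `x_i P y_i`, which
makes the branch sets disjoint. The edge of `P` entering `x_{i+1}` realises `y_i → y_{i+1}`, and
the edge of `Q` leaving `y_{i+1}` realises `y_{i+1} → y_i`.
-/

namespace DGraph

variable {V : Type u}

theorem _root_.List.Nodup.eq_of_getElem?_eq_some {l : List V} (hl : l.Nodup) {i j : ℕ} {v : V}
    (hi : l[i]? = some v) (hj : l[j]? = some v) : i = j :=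
  (List.getElem?_inj (List.getElem?_eq_some_iff.mp hi).1 hl).mp (hi.trans hj.symm)

theorem mem_zip_tail_iff {l : List V} {e : V × V} :
    e ∈ l.zip l.tail ↔ ∃ i, l[i]? = some e.1 ∧ l[i + 1]? = some e.2 := by
  simp only [List.mem_iff_getElem?, List.getElem?_zip_eq_some, List.getElem?_tail]

theorem mem_edges_ofList {l : List V} {e : V × V} :
    e ∈ (ofList l).edges ↔ [e.1, e.2] <:+: l := by
  change e ∈ l.zip l.tail ↔ _
  rw [mem_zip_tail_iff, List.infix_iff_getElem?]
  constructor
  · rintro ⟨i, h1, h2⟩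
    refine ⟨i, ?_, fun j hj => ?_⟩
    · have := (List.getElem?_eq_some_iff.mp h2).1
      simp only [List.length_cons, List.length_nil]
      omega
    · match j, hj with
      | 0, _ => simpa using h1
      | 1, _ => simpa [Nat.add_comm] using h2
  · rintro ⟨k, -, hk⟩
    exact ⟨k, by simpa using hk 0 (by simp), by simpa [Nat.add_comm] using hk 1 (by simp)⟩

theorem ofList_subset_of_infix {l₁ l₂ : List V} (h : l₁ <:+: l₂) : ofList l₁ ⊆ ofList l₂ :=
  ⟨fun _ hv => h.subset hv, fun _ he => (mem_edges_ofList.mp he).trans h |> mem_edges_ofList.mpr⟩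

theorem reverse_ofList (l : List V) : (ofList l).reverse = ofList l.reverse := by
  refine congrArg₂ DGraph.mk (Set.ext fun v => List.mem_reverse.symm) (Set.ext fun e => ?_)
  change (e.2, e.1) ∈ (ofList l).edges ↔ e ∈ (ofList l.reverse).edges
  rw [mem_edges_ofList, mem_edges_ofList, ← List.reverse_infix]
  rfl

theorem union_subset {G H K : DGraph V} (hG : G ⊆ K) (hH : H ⊆ K) : G ∪ H ⊆ K :=
  ⟨Set.union_subset hG.1 hH.1, Set.union_subset hG.2 hH.2⟩

theorem subset_union_left {G H K : DGraph V} (h : G ⊆ H) : G ⊆ H ∪ K :=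
  ⟨h.1.trans Set.subset_union_left, h.2.trans Set.subset_union_left⟩

theorem subset_union_right {G H K : DGraph V} (h : G ⊆ K) : G ⊆ H ∪ K :=
  ⟨h.1.trans Set.subset_union_right, h.2.trans Set.subset_union_right⟩

theorem isPathFrom_ofList_drop {l : List V} (hnd : l.Nodup) {i : ℕ} {v r : V}
    (hv : l[i]? = some v) (hr : l.getLast? = some r) :
    IsPathFrom (ofList l) v r (l.drop i) := by
  have hi : i < l.length := (List.getElem?_eq_some_iff.mp hv).1
  have hsuf : l.drop i <:+: l := (List.drop_suffix i l).isInfix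
  refine ⟨⟨?_, hsuf.nodup hnd, fun w hw => hsuf.subset hw,
    fun e he => (ofList_subset_of_infix hsuf).2 he⟩, ?_, ?_⟩
  · simpa [List.drop_eq_nil_iff] using hi
  · rwa [List.head?_drop]
  · rwa [List.getLast?_drop, if_neg (by omega)]

theorem isInArborescence_ofList {l : List V} (hnd : l.Nodup) {r : V}
    (hr : l.getLast? = some r) : IsInArborescence (ofList l) r := by
  have hlast : l[l.length - 1]? = some r := List.getLast?_eq_getElem? ▸ hr
  refine ⟨List.mem_of_getLast? hr, fun e he => ?_, fun w hw => ?_, fun v hv hne => ?_,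
    fun v hv => ?_⟩
  · obtain ⟨i, h1, h2⟩ := mem_zip_tail_iff.mp he
    exact ⟨List.mem_of_getElem? h1, List.mem_of_getElem? h2⟩
  · obtain ⟨i, h1, h2⟩ := mem_zip_tail_iff.mp hw
    have := hnd.eq_of_getElem?_eq_some h1 hlast
    have := (List.getElem?_eq_some_iff.mp h2).1
    omega
  · obtain ⟨i, hi⟩ := List.mem_iff_getElem?.mp hv
    have hi1 : i + 1 < l.length := by
      have := (List.getElem?_eq_some_iff.mp hi).1
      have : i ≠ l.length - 1 := fun h => hne (Option.some.inj ((h ▸ hi).symm.trans hlast))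
      omega
    refine ⟨l[i + 1], mem_zip_tail_iff.mpr ⟨i, hi, List.getElem?_eq_getElem hi1⟩,
      fun w hw => ?_⟩
    obtain ⟨j, hj1, hj2⟩ := mem_zip_tail_iff.mp hw
    obtain rfl := hnd.eq_of_getElem?_eq_some hj1 hi
    exact Option.some.inj (hj2.symm.trans (List.getElem?_eq_getElem hi1))
  · obtain ⟨i, hi⟩ := List.mem_iff_getElem?.mp hv
    exact ⟨_, isPathFrom_ofList_drop hnd hi hr⟩

theorem isOutArborescence_ofList {l : List V} (hnd : l.Nodup) {r : V}
    (hr : l.head? = some r) : IsOutArborescence (ofList l) r := by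
  rw [IsOutArborescence, reverse_ofList]
  exact isInArborescence_ofList (List.nodup_reverse.mpr hnd) (by rwa [List.getLast?_reverse])

theorem isButterflyMinor_of_pathBranches {D H : DGraph V} (A B : V → List V)
    (hA : ∀ v ∈ H.verts, (A v).Nodup ∧ (A v).getLast? = some v ∧ ofList (A v) ⊆ D)
    (hB : ∀ v ∈ H.verts, (B v).Nodup ∧ (B v).head? = some v ∧ ofList (B v) ⊆ D)
    (hAB : ∀ v ∈ H.verts, ∀ u ∈ A v, u ∈ B v → u = v)
    (hdisj : ∀ v ∈ H.verts, ∀ w ∈ H.verts, v ≠ w → ∀ u ∈ A v ++ B v, u ∉ A w ++ B w)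
    (hedge : ∀ e ∈ H.edges, ∃ e' ∈ D.edges, e'.1 ∈ B e.1 ∧ e'.2 ∈ A e.2) :
    D.IsButterflyMinor H := by
  classical
  let emap (e : V × V) : V × V :=
    if h : ∃ e' ∈ D.edges, e'.1 ∈ B e.1 ∧ e'.2 ∈ A e.2 then h.choose else e
  have hemap (e) (he : e ∈ H.edges) :
      emap e ∈ D.edges ∧ (emap e).1 ∈ B e.1 ∧ (emap e).2 ∈ A e.2 := by
    simp only [emap, dif_pos (hedge e he)]
    exact (hedge e he).choose_spec
  exact ⟨{
    bag := fun v => ofList (A v) ∪ ofList (B v)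
    tin := fun v => ofList (A v)
    tout := fun v => ofList (B v)
    emap := emap
    bag_sub := fun v hv => union_subset (hA v hv).2.2 (hB v hv).2.2
    bag_disjoint := fun v hv w hw hvw => Set.eq_empty_of_forall_notMem fun u hu =>
      hdisj v hv w hw hvw u (List.mem_append.mpr hu.1) (List.mem_append.mpr hu.2)
    bag_eq := fun _ _ => rfl
    tin_arb := fun v hv => isInArborescence_ofList (hA v hv).1 (hA v hv).2.1
    tout_arb := fun v hv => isOutArborescence_ofList (hB v hv).1 (hB v hv).2.1
    roots_eq := fun v hv => Set.eq_singleton_iff_unique_mem.mpr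
      ⟨⟨List.mem_of_getLast? (hA v hv).2.1, List.mem_of_head? (hB v hv).2.1⟩,
        fun u hu => hAB v hv u hu.1 hu.2⟩
    emap_mem := fun e he => (hemap e he).1
    emap_tail := fun e he => (hemap e he).2.1
    emap_head := fun e he => (hemap e he).2.2 }⟩

theorem _root_.List.getElem?_map_range_eq_some {n i : ℕ} {r : ℕ → V} {v : V} :
    ((List.range n).map r)[i]? = some v ↔ i < n ∧ r i = v := by
  simp [List.getElem?_eq_some_iff]

theorem mem_verts_doubleOfList_map_range {n : ℕ} {r : ℕ → V} {v : V} :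
    v ∈ (doubleOfList ((List.range n).map r)).verts ↔ ∃ i < n, r i = v := by
  change v ∈ (List.range n).map r ∨ v ∈ (List.range n).map r ↔ _
  simp

theorem mem_edges_ofList_map_range {n : ℕ} {r : ℕ → V} {e : V × V} :
    e ∈ (ofList ((List.range n).map r)).edges ↔ ∃ i, i + 1 < n ∧ e = (r i, r (i + 1)) := by
  change e ∈ List.zip _ _ ↔ _
  rw [mem_zip_tail_iff]
  simp only [List.getElem?_map_range_eq_some]
  constructor
  · rintro ⟨i, ⟨-, h1⟩, hi, h2⟩
    exact ⟨i, hi, Prod.ext h1.symm h2.symm⟩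
  · rintro ⟨i, hi, rfl⟩
    exact ⟨i, ⟨by omega, rfl⟩, hi, rfl⟩

theorem mem_edges_doubleOfList_map_range {n : ℕ} {r : ℕ → V} {e : V × V} :
    e ∈ (doubleOfList ((List.range n).map r)).edges ↔
      ∃ i, i + 1 < n ∧ (e = (r i, r (i + 1)) ∨ e = (r (i + 1), r i)) := by
  change e ∈ (ofList _).edges ∨ (e.2, e.1) ∈ (ofList _).edges ↔ _
  rw [mem_edges_ofList_map_range, mem_edges_ofList_map_range]
  constructor
  · rintro (⟨i, hi, rfl⟩ | ⟨i, hi, h⟩)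
    · exact ⟨i, hi, .inl rfl⟩
    · exact ⟨i, hi, .inr (Prod.ext (congrArg Prod.snd h) (congrArg Prod.fst h))⟩
  · rintro ⟨i, hi, rfl | rfl⟩
    exacts [.inl ⟨i, hi, rfl⟩, .inr ⟨i, hi, rfl⟩]

theorem exists_doublePath_minor_of_pathBranches {G : DGraph V} {n : ℕ} (hn : 0 < n) (r : ℕ → V)
    (A B : ℕ → List V)
    (hA : ∀ i < n, (A i).Nodup ∧ (A i).getLast? = some (r i) ∧ ofList (A i) ⊆ G)
    (hB : ∀ i < n, (B i).Nodup ∧ (B i).head? = some (r i) ∧ ofList (B i) ⊆ G)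
    (hAB : ∀ i < n, ∀ u ∈ A i, u ∈ B i → u = r i)
    (hdisj : ∀ i < n, ∀ j < n, i ≠ j → ∀ u ∈ A i ++ B i, u ∉ A j ++ B j)
    (hfwd : ∀ i, i + 1 < n → ∃ e ∈ G.edges, e.1 ∈ B i ∧ e.2 ∈ A (i + 1))
    (hbwd : ∀ i, i + 1 < n → ∃ e ∈ G.edges, e.1 ∈ B (i + 1) ∧ e.2 ∈ A i) :
    ∃ H, G.IsButterflyMinor H ∧ IsDoublePath H (r 0) (r (n - 1)) := by
  have hr : ∀ i < n, r i ∈ A i ++ B i := fun i hi =>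
    List.mem_append_left _ (List.mem_of_getLast? (hA i hi).2.1)
  have hinj : Set.InjOn r (Set.Iio n) := fun i hi j hj hij => by
    by_contra hne
    exact hdisj i hi j hj hne _ (hr i hi) (hij ▸ hr j hj)
  set idx := Function.invFunOn r (Set.Iio n)
  have hidx : ∀ i < n, idx (r i) = i := fun i hi => hinj.leftInvOn_invFunOn hi
  refine ⟨_, isButterflyMinor_of_pathBranches (A ∘ idx) (B ∘ idx) ?_ ?_ ?_ ?_ ?_,
    (List.range n).map r, List.nodup_range.map_on fun i hi j hj => hinj (by simpa using hi)
      (by simpa using hj), ?_, ?_, rfl⟩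
  · rintro v hv
    obtain ⟨i, hi, rfl⟩ := mem_verts_doubleOfList_map_range.mp hv
    simpa [hidx i hi] using hA i hi
  · rintro v hv
    obtain ⟨i, hi, rfl⟩ := mem_verts_doubleOfList_map_range.mp hv
    simpa [hidx i hi] using hB i hi
  · rintro v hv
    obtain ⟨i, hi, rfl⟩ := mem_verts_doubleOfList_map_range.mp hv
    simpa [hidx i hi] using hAB i hi
  · rintro v hv w hw hvw
    obtain ⟨i, hi, rfl⟩ := mem_verts_doubleOfList_map_range.mp hv
    obtain ⟨j, hj, rfl⟩ := mem_verts_doubleOfList_map_range.mp hw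
    simpa [hidx i hi, hidx j hj] using hdisj i hi j hj (fun h => hvw (h ▸ rfl))
  · rintro e he
    obtain ⟨i, hi, rfl | rfl⟩ := mem_edges_doubleOfList_map_range.mp he
    · simpa [hidx i (by omega), hidx (i + 1) hi] using hfwd i hi
    · simpa [hidx i (by omega), hidx (i + 1) hi] using hbwd i hi
  · simp [List.head?_eq_getElem?, hn]
  · simp [List.getLast?_eq_getElem?, hn]

/-- `seg L x y` unfolds to `segIdx L (L.idxOf x) (L.idxOf y)`. -/
def segIdx (L : List V) (s t : ℕ) : List V := (L.drop s).take (t + 1 - s)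

theorem getElem?_segIdx (L : List V) {s t k : ℕ} (h : s + k ≤ t) :
    (segIdx L s t)[k]? = L[s + k]? := by
  rw [segIdx, List.getElem?_take, if_pos (by omega), List.getElem?_drop]

theorem length_segIdx (L : List V) {s t : ℕ} (ht : t < L.length) :
    (segIdx L s t).length = t + 1 - s := by
  rw [segIdx, List.length_take, List.length_drop]
  omega

theorem mem_segIdx_iff {L : List V} {s t : ℕ} {v : V} :
    v ∈ segIdx L s t ↔ ∃ m, s ≤ m ∧ m ≤ t ∧ L[m]? = some v := by
  simp only [segIdx, List.mem_iff_getElem?, List.getElem?_take, List.getElem?_drop]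
  constructor
  · rintro ⟨k, hk⟩
    split_ifs at hk with h
    · exact ⟨s + k, by omega, by omega, hk⟩
  · rintro ⟨m, hsm, hmt, hm⟩
    exact ⟨m - s, by rw [if_pos (by omega), Nat.add_sub_cancel' hsm]; exact hm⟩

theorem segIdx_infix (L : List V) (s t : ℕ) : segIdx L s t <:+: L :=
  (List.take_prefix _ _).isInfix.trans (List.drop_suffix _ _).isInfix

theorem head?_segIdx (L : List V) {s t : ℕ} (h : s ≤ t) : (segIdx L s t).head? = L[s]? := by
  rw [List.head?_eq_getElem?, getElem?_segIdx L (by omega), Nat.add_zero]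

theorem getLast?_segIdx (L : List V) {s t : ℕ} (hst : s ≤ t) (ht : t < L.length) :
    (segIdx L s t).getLast? = L[t]? := by
  rw [List.getLast?_eq_getElem?, length_segIdx L ht, getElem?_segIdx L (by omega)]
  congr 1
  omega

theorem mem_internals_segIdx {L : List V} {s t m : ℕ} {v : V} (hsm : s < m) (hmt : m < t)
    (ht : t < L.length) (hm : L[m]? = some v) : v ∈ internals (segIdx L s t) := by
  rw [internals, List.mem_iff_getElem?]
  refine ⟨m - s - 1, ?_⟩
  rw [List.getElem?_dropLast, List.length_tail, length_segIdx L ht, if_pos (by omega),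
    List.getElem?_tail, getElem?_segIdx L (by omega), ← hm]
  congr 1
  omega

/-- Index form of lacing: the `i`-th common segment is `P[α i..β i] = Q[γ i..δ i]`, i.e.
`x (i + 1) = P[α i] = Q[γ i]` and `y (i + 1) = P[β i] = Q[δ i]` in the notation of `Laced`. -/
structure LacedIndices (P Q : List V) (n : ℕ) (α β γ δ : ℕ → ℕ) : Prop where
  pos : 0 < n
  α_le_β : ∀ i < n, α i ≤ β i
  β_lt_α : ∀ i, i + 1 < n → β i < α (i + 1)
  γ_le_δ : ∀ i < n, γ i ≤ δ i
  δ_lt_γ : ∀ i, i + 1 < n → δ (i + 1) < γ i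
  β_lt_length : β (n - 1) < P.length
  δ_lt_length : δ 0 < Q.length
  segIdx_eq : ∀ i < n, segIdx P (α i) (β i) = segIdx Q (γ i) (δ i)
  not_mem_of_gap : ∀ i, i + 1 < n → ∀ m v, δ (i + 1) < m → m < γ i → Q[m]? = some v → v ∉ P

namespace LacedIndices

variable {P Q : List V} {n : ℕ} {α β γ δ : ℕ → ℕ}

theorem α_monotoneOn (hL : LacedIndices P Q n α β γ δ) : MonotoneOn α (Set.Iio n) :=
  monotoneOn_of_le_add_one Set.ordConnected_Iio fun i _ hi hi1 =>
    ((hL.α_le_β i hi).trans (hL.β_lt_α i hi1).le)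

theorem β_monotoneOn (hL : LacedIndices P Q n α β γ δ) : MonotoneOn β (Set.Iio n) :=
  monotoneOn_of_le_add_one Set.ordConnected_Iio fun i _ _ hi1 =>
    ((hL.β_lt_α i hi1).le.trans (hL.α_le_β (i + 1) hi1))

theorem δ_antitoneOn (hL : LacedIndices P Q n α β γ δ) : AntitoneOn δ (Set.Iio n) :=
  antitoneOn_of_add_one_le Set.ordConnected_Iio fun i _ hi hi1 =>
    ((hL.δ_lt_γ i hi1).le.trans (hL.γ_le_δ i hi))

theorem β_lt_length' (hL : LacedIndices P Q n α β γ δ) {i : ℕ} (hi : i < n) :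
    β i < P.length :=
  (hL.β_monotoneOn hi (by simp [hL.pos] : n - 1 ∈ Set.Iio n) (by omega)).trans_lt
    hL.β_lt_length

theorem δ_lt_length' (hL : LacedIndices P Q n α β γ δ) {i : ℕ} (hi : i < n) :
    δ i < Q.length :=
  (hL.δ_antitoneOn (hL.pos : 0 ∈ Set.Iio n) hi (Nat.zero_le i)).trans_lt hL.δ_lt_length

theorem δ_sub_γ (hL : LacedIndices P Q n α β γ δ) {i : ℕ} (hi : i < n) :
    δ i - γ i = β i - α i := by
  have hlen := congrArg List.length (hL.segIdx_eq i hi)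
  rw [length_segIdx P (hL.β_lt_length' hi), length_segIdx Q (hL.δ_lt_length' hi)] at hlen
  have := hL.α_le_β i hi
  have := hL.γ_le_δ i hi
  omega

theorem getElem?_eq_of_mem_seg (hL : LacedIndices P Q n α β γ δ) {i m : ℕ} (hi : i < n)
    (hγm : γ i ≤ m) (hmδ : m ≤ δ i) : Q[m]? = P[α i + (m - γ i)]? := by
  have hk : (segIdx P (α i) (β i))[m - γ i]? = (segIdx Q (γ i) (δ i))[m - γ i]? := by
    rw [hL.segIdx_eq i hi]
  have := hL.δ_sub_γ hi
  have := hL.α_le_β i hi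
  rwa [getElem?_segIdx P (by omega), getElem?_segIdx Q (by omega), Nat.add_sub_cancel' hγm,
    eq_comm] at hk

theorem getElem?_δ_eq (hL : LacedIndices P Q n α β γ δ) {i : ℕ} (hi : i < n) :
    Q[δ i]? = P[β i]? := by
  rw [hL.getElem?_eq_of_mem_seg hi (hL.γ_le_δ i hi) le_rfl]
  have := hL.δ_sub_γ hi
  have := hL.α_le_β i hi
  have := hL.γ_le_δ i hi
  congr 1
  omega

def inBranch (Q : List V) (n : ℕ) (γ δ : ℕ → ℕ) (i : ℕ) : List V :=
  segIdx Q (if i + 1 < n then δ (i + 1) + 1 else γ i) (δ i)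

def outBranch (P : List V) (n : ℕ) (α β : ℕ → ℕ) (i : ℕ) : List V :=
  segIdx P (β i) (if i + 1 < n then α (i + 1) - 1 else β i)

theorem inBranch_start_le (hL : LacedIndices P Q n α β γ δ) (i : ℕ) :
    (if i + 1 < n then δ (i + 1) + 1 else γ i) ≤ γ i := by
  split_ifs with hi1
  · exact hL.δ_lt_γ i hi1
  · exact le_rfl

theorem le_outBranch_end (hL : LacedIndices P Q n α β γ δ) (i : ℕ) :
    β i ≤ if i + 1 < n then α (i + 1) - 1 else β i := by
  split_ifs with hi1
  · have := hL.β_lt_α i hi1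
    omega
  · exact le_rfl

theorem exists_index_of_mem_inBranch (hL : LacedIndices P Q n α β γ δ) {i : ℕ} (hi : i < n)
    {v : V} (hv : v ∈ inBranch Q n γ δ i) (hvP : v ∈ P) :
    ∃ k, α i ≤ k ∧ k ≤ β i ∧ P[k]? = some v := by
  obtain ⟨m, hsm, hmδ, hm⟩ := mem_segIdx_iff.mp hv
  have hγm : γ i ≤ m := by
    by_contra hlt
    split_ifs at hsm with hi1
    · exact hL.not_mem_of_gap i hi1 m v (by omega) (by omega) hm hvP
    · omega
  have := hL.δ_sub_γ hi
  have := hL.α_le_β i hi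
  exact ⟨_, by omega, by omega, hL.getElem?_eq_of_mem_seg hi hγm hmδ ▸ hm⟩

theorem eq_of_mem_inBranch_of_mem_outBranch (hL : LacedIndices P Q n α β γ δ) (hP : P.Nodup)
    {i j : ℕ} (hi : i < n) (hj : j < n) {v : V} (hvi : v ∈ inBranch Q n γ δ i)
    (hvj : v ∈ outBranch P n α β j) : i = j ∧ P[β i]? = some v := by
  obtain ⟨k', hk'₁, hk'₂, hk'⟩ := mem_segIdx_iff.mp hvj
  obtain ⟨k, hk₁, hk₂, hk⟩ :=
    hL.exists_index_of_mem_inBranch hi hvi (List.mem_of_getElem? hk')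
  obtain rfl := hP.eq_of_getElem?_eq_some hk hk'
  obtain rfl : i = j := by
    rcases lt_trichotomy i j with h | h | h
    · have := hL.β_lt_α i (by omega)
      have := hL.α_le_β (i + 1) (by omega)
      have := hL.β_monotoneOn (show i + 1 < n by omega) hj h
      omega
    · exact h
    · rw [if_pos (by omega)] at hk'₂
      have := hL.β_lt_α j (by omega)
      have := hL.α_monotoneOn (show j + 1 < n by omega) hi h
      omega
  exact ⟨rfl, by rwa [show β i = k by omega]⟩

theorem not_mem_inBranch_of_lt (hL : LacedIndices P Q n α β γ δ) (hQ : Q.Nodup) {i j : ℕ}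
    (hij : i < j) (hj : j < n) {v : V} (hvi : v ∈ inBranch Q n γ δ i) :
    v ∉ inBranch Q n γ δ j := by
  intro hvj
  obtain ⟨m, hm₁, -, hm⟩ := mem_segIdx_iff.mp hvi
  obtain ⟨m', -, hm'₂, hm'⟩ := mem_segIdx_iff.mp hvj
  obtain rfl := hQ.eq_of_getElem?_eq_some hm hm'
  rw [if_pos (by omega)] at hm₁
  have := hL.δ_antitoneOn (show i + 1 < n by omega) hj hij
  omega

theorem not_mem_outBranch_of_lt (hL : LacedIndices P Q n α β γ δ) (hP : P.Nodup) {i j : ℕ}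
    (hij : i < j) (hj : j < n) {v : V} (hvi : v ∈ outBranch P n α β i) :
    v ∉ outBranch P n α β j := by
  intro hvj
  obtain ⟨k, -, hk₂, hk⟩ := mem_segIdx_iff.mp hvi
  obtain ⟨k', hk'₁, -, hk'⟩ := mem_segIdx_iff.mp hvj
  obtain rfl := hP.eq_of_getElem?_eq_some hk hk'
  rw [if_pos (by omega)] at hk₂
  have := hL.β_lt_α i (by omega)
  have := hL.α_le_β (i + 1) (by omega)
  have := hL.β_monotoneOn (show i + 1 < n by omega) hj hij
  omega

theorem branches_disjoint (hL : LacedIndices P Q n α β γ δ) (hP : P.Nodup) (hQ : Q.Nodup)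
    {i j : ℕ} (hi : i < n) (hj : j < n) (hij : i ≠ j) {v : V}
    (hvi : v ∈ inBranch Q n γ δ i ++ outBranch P n α β i) :
    v ∉ inBranch Q n γ δ j ++ outBranch P n α β j := by
  simp only [List.mem_append, not_or] at hvi ⊢
  rcases hvi with hvi | hvi
  · refine ⟨fun hvj => ?_,
      fun hvj => hij (hL.eq_of_mem_inBranch_of_mem_outBranch hP hi hj hvi hvj).1⟩
    rcases hij.lt_or_gt with h | h
    · exact hL.not_mem_inBranch_of_lt hQ h hj hvi hvj
    · exact hL.not_mem_inBranch_of_lt hQ h hi hvj hvi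
  · refine ⟨fun hvj => hij (hL.eq_of_mem_inBranch_of_mem_outBranch hP hj hi hvj hvi).1.symm,
      fun hvj => ?_⟩
    rcases hij.lt_or_gt with h | h
    · exact hL.not_mem_outBranch_of_lt hP h hj hvi hvj
    · exact hL.not_mem_outBranch_of_lt hP h hi hvj hvi

theorem exists_forward_edge (hL : LacedIndices P Q n α β γ δ) {i : ℕ} (hi : i + 1 < n) :
    ∃ e ∈ (ofList P ∪ ofList Q).edges,
      e.1 ∈ outBranch P n α β i ∧ e.2 ∈ inBranch Q n γ δ (i + 1) := by
  have := hL.β_lt_α i hi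
  have hlen : α (i + 1) < P.length := (hL.α_le_β _ hi).trans_lt (hL.β_lt_length' hi)
  have hQP : Q[γ (i + 1)]? = P[α (i + 1)]? := by
    simpa using hL.getElem?_eq_of_mem_seg hi le_rfl (hL.γ_le_δ _ hi)
  refine ⟨(P[α (i + 1) - 1], P[α (i + 1)]), Set.mem_union_left _ (mem_zip_tail_iff.mpr
      ⟨α (i + 1) - 1, List.getElem?_eq_getElem _, ?_⟩),
    mem_segIdx_iff.mpr ⟨α (i + 1) - 1, by omega, by rw [if_pos hi], List.getElem?_eq_getElem _⟩,
    mem_segIdx_iff.mpr ⟨γ (i + 1), hL.inBranch_start_le _, hL.γ_le_δ _ hi,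
      hQP.trans (List.getElem?_eq_getElem _)⟩⟩
  rw [Nat.sub_add_cancel (by omega)]
  exact List.getElem?_eq_getElem _

theorem exists_backward_edge (hL : LacedIndices P Q n α β γ δ) {i : ℕ} (hi : i + 1 < n) :
    ∃ e ∈ (ofList P ∪ ofList Q).edges,
      e.1 ∈ outBranch P n α β (i + 1) ∧ e.2 ∈ inBranch Q n γ δ i := by
  have := hL.δ_lt_γ i hi
  have := hL.γ_le_δ i (by omega)
  have : δ i < Q.length := hL.δ_lt_length' (by omega)
  refine ⟨(Q[δ (i + 1)], Q[δ (i + 1) + 1]), Set.mem_union_right _ (mem_zip_tail_iff.mpr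
      ⟨_, List.getElem?_eq_getElem _, List.getElem?_eq_getElem _⟩),
    mem_segIdx_iff.mpr ⟨β (i + 1), le_rfl, hL.le_outBranch_end _,
      (hL.getElem?_δ_eq hi).symm.trans (List.getElem?_eq_getElem _)⟩,
    mem_segIdx_iff.mpr ⟨δ (i + 1) + 1, by rw [if_pos hi], by omega, List.getElem?_eq_getElem _⟩⟩

theorem exists_doublePath_minor (hL : LacedIndices P Q n α β γ δ) (hP : P.Nodup)
    (hQ : Q.Nodup) (r : ℕ → V) (hr : ∀ i < n, P[β i]? = some (r i)) :
    ∃ H, (ofList P ∪ ofList Q).IsButterflyMinor H ∧ IsDoublePath H (r 0) (r (n - 1)) := by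
  refine exists_doublePath_minor_of_pathBranches hL.pos r (inBranch Q n γ δ) (outBranch P n α β)
    (fun i hi => ⟨(segIdx_infix _ _ _).nodup hQ, ?_,
      subset_union_right (ofList_subset_of_infix (segIdx_infix _ _ _))⟩)
    (fun i hi => ⟨(segIdx_infix _ _ _).nodup hP, ?_,
      subset_union_left (ofList_subset_of_infix (segIdx_infix _ _ _))⟩)
    (fun i hi u hu hu' => ?_) (fun i hi j hj hij u hu => hL.branches_disjoint hP hQ hi hj hij hu)
    (fun i hi => hL.exists_forward_edge hi) (fun i hi => hL.exists_backward_edge hi)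
  · rw [inBranch, getLast?_segIdx Q ((hL.inBranch_start_le i).trans (hL.γ_le_δ i hi))
      (hL.δ_lt_length' hi), hL.getElem?_δ_eq hi, hr i hi]
  · rw [outBranch, head?_segIdx P (hL.le_outBranch_end i), hr i hi]
  · obtain ⟨-, h⟩ := hL.eq_of_mem_inBranch_of_mem_outBranch hP hi hi hu hu'
    exact Option.some.inj (h.symm.trans (hr i hi))

end LacedIndices

theorem _root_.List.Nodup.eq_of_getLast?_of_idxOf_le [DecidableEq V] {l : List V} (hl : l.Nodup)
    {b v : V} (hb : l.getLast? = some b) (hv : v ∈ l) (h : l.idxOf b ≤ l.idxOf v) : v = b := by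
  have hlast : l[l.length - 1]? = some b := List.getLast?_eq_getElem? ▸ hb
  have := hl.eq_of_getElem?_eq_some (List.getElem?_idxOf (List.mem_of_getLast? hb)) hlast
  have := List.idxOf_lt_length_iff.mpr hv
  exact Option.some.inj ((List.getElem?_idxOf hv).symm.trans
    (by rw [show l.idxOf v = l.length - 1 by omega, hlast]))

theorem Laced.exists_lacedIndices [DecidableEq V] {P Q : List V} {a b : V} (hPQ : Laced P Q)
    (hP : P.Nodup) (hPa : P.head? = some a) (hPb : P.getLast? = some b)
    (hQb : Q.head? = some b) (hQa : Q.getLast? = some a) :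
    ∃ (n : ℕ) (r : ℕ → V) (α β γ δ : ℕ → ℕ), LacedIndices P Q n α β γ δ ∧
      (∀ i < n, P[β i]? = some (r i)) ∧ r 0 = a ∧ r (n - 1) = b := by
  rcases hPQ with hdisj | ⟨ℓ, x, y, hℓ, hle, hlt, hseg, hgap, hxℓ, hy₁⟩
  · exact absurd (List.mem_of_getLast? hQa) (hdisj a (List.mem_of_head? hPa))
  have hy₁Q : Q.idxOf (y 1) < Q.length := List.idxOf_lt_length_iff.mpr (hle 1 le_rfl hℓ).2.2.1
  have hya : y 1 = a := by
    refine (hy₁ a (List.mem_of_getLast? ?_) (List.mem_of_head? hPa)).symm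
    rwa [List.getLast?_drop, if_neg (by omega)]
  have hxb : x ℓ = b := by
    refine (hxℓ b (List.mem_of_head? ?_) (List.mem_of_getLast? hPb)).symm
    rwa [List.head?_take, if_neg (by omega)]
  have hyb : y ℓ = b := by
    obtain ⟨⟨-, hyP, hxy⟩, -⟩ := hle ℓ hℓ le_rfl
    exact hP.eq_of_getLast?_of_idxOf_le hPb hyP (hxb ▸ hxy)
  refine ⟨ℓ, fun i => y (i + 1), fun i => P.idxOf (x (i + 1)), fun i => P.idxOf (y (i + 1)),
    fun i => Q.idxOf (x (i + 1)), fun i => Q.idxOf (y (i + 1)),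
    ⟨hℓ, fun i hi => (hle (i + 1) (by omega) hi).1.2.2,
      fun i hi => (hlt (i + 1) (by omega) hi).1.2.2,
      fun i hi => (hle (i + 1) (by omega) hi).2.2.2,
      fun i hi => (hlt (i + 1) (by omega) hi).2.2.2, ?_, hy₁Q,
      fun i hi => hseg (i + 1) (by omega) hi, ?_⟩,
    fun i hi => List.getElem?_idxOf (hle (i + 1) (by omega) hi).1.2.1, hya, ?_⟩
  · rw [Nat.sub_add_cancel hℓ]
    exact List.idxOf_lt_length_iff.mpr (hle ℓ hℓ le_rfl).1.2.1
  · intro i hi m v hm₁ hm₂ hm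
    exact hgap (i + 1) (by omega) hi v (mem_internals_segIdx hm₁ hm₂
      (List.idxOf_lt_length_iff.mpr (hle (i + 1) (by omega) (by omega)).2.1) hm)
  · show y (ℓ - 1 + 1) = b
    rwa [Nat.sub_add_cancel hℓ]

end DGraph

/-- Let `P` be a directed `a`–`b` path and `Q` a directed
`b`–`a` path in `D` such that `P` and `Q` are laced.  Then the union `P ∪ Q`
has a butterfly minor that is a double path with endpoints `a` and `b`. -/
theorem laced_union_contracts_to_double_path {V : Type u} [DecidableEq V]
    (D : DGraph V) (a b : V) (P Q : List V)
    (hP : DGraph.IsPathFrom D a b P) (hQ : DGraph.IsPathFrom D b a Q)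
    (h : DGraph.Laced P Q) :
    ∃ H : DGraph V, (DGraph.ofList P ∪ DGraph.ofList Q).IsButterflyMinor H ∧
      DGraph.IsDoublePath H a b := by
  obtain ⟨⟨-, hPnd, -, -⟩, hPa, hPb⟩ := hP
  obtain ⟨⟨-, hQnd, -, -⟩, hQb, hQa⟩ := hQ
  obtain ⟨n, r, α, β, γ, δ, hL, hr, rfl, rfl⟩ := h.exists_lacedIndices hPnd hPa hPb hQb hQa
  exact hL.exists_doublePath_minor hPnd hQnd r hr
end

section
/- Let D be a strongly connected directed graph containing an out-ray R. Then there exists a vertex r ∈ V(R) such that either there is an in-arborescence T rooted at r in D that intersects V(R) exactly in r and in infinitely many leaves of T, or there is an in-ray S rooted at r in D that is knit with the final segment rR. -/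
/-!
Common definitions: directed graphs as vertex/edge sets, directed paths and
walks, rays, arborescences, tree-like models and butterfly minors, laced
paths, knit rays, and the shapes (dominated directed rays, stars, combs,
chains of triangles) from the paper.
-/

universe u

/-!
Fix a shortest-path in-arborescence `K` of `D` towards `f 0`; by strong connectivity it spans `D`.
Call `n` an R-child of `j` if `f j` is the first vertex of the ray `R` after `f n` on the `K`-path
from `f n`. If some `j` has infinitely many R-children, the `K`-paths from them to `f j` form the
required in-arborescence. Otherwise the tree of R-children is infinite and locally finite, so by
König's lemma it contains an infinite chain `q 0, q 1, …`, and the `K`-paths from `f (q (k + 1))`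
to `f (q k)` concatenate to an in-ray meeting `R` infinitely often and avoiding `R` between
consecutive hits. Among its stretches between hits choose paths `f (S i) ⇝ f (E i)` with
`E 0 < E 1 ≤ S 0 < E 2 ≤ S 1 < ⋯`. Starting at `f (E 0)` and going, for each `i`, backwards
through the stretch to `f (S i)` and then backwards along `R` to `f (E (i + 1))` traces an in-ray
knit with the tail of `R` at `f (E 0)`.
-/

section BlockConcat

variable {α : Type*}

def blockStart (L : ℕ → ℕ) (i : ℕ) : ℕ := ∑ j ∈ Finset.range i, L j

@[simp] lemma blockStart_zero (L : ℕ → ℕ) : blockStart L 0 = 0 := Finset.sum_range_zero L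

lemma blockStart_succ (L : ℕ → ℕ) (i : ℕ) : blockStart L (i + 1) = blockStart L i + L i :=
  Finset.sum_range_succ L i

variable {L : ℕ → ℕ}

lemma blockStart_strictMono (hL : ∀ i, 0 < L i) : StrictMono (blockStart L) :=
  strictMono_nat_of_lt_succ fun i => by rw [blockStart_succ]; linarith [hL i]

lemma exists_eq_blockStart_add (hL : ∀ i, 0 < L i) (m : ℕ) :
    ∃ i δ, δ < L i ∧ m = blockStart L i + δ := by
  induction m with
  | zero => exact ⟨0, 0, hL 0, rfl⟩
  | succ m ih =>
    obtain ⟨i, δ, hδ, rfl⟩ := ih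
    by_cases h : δ + 1 < L i
    · exact ⟨i, δ + 1, h, by omega⟩
    · exact ⟨i + 1, 0, hL _, by rw [blockStart_succ]; omega⟩

/-- The concatenation of the blocks `B i 0, …, B i (L i)`, where the last entry of each block is
identified with the first entry of the next one. -/
noncomputable def concatBlocks (L : ℕ → ℕ) (B : ℕ → ℕ → α) (m : ℕ) : α :=
  B (Nat.findGreatest (fun i => blockStart L i ≤ m) m)
    (m - blockStart L (Nat.findGreatest (fun i => blockStart L i ≤ m) m))

variable {B : ℕ → ℕ → α}

lemma concatBlocks_blockStart_add (hL : ∀ i, 0 < L i) (hB : ∀ i, B i (L i) = B (i + 1) 0)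
    {i δ : ℕ} (hδ : δ ≤ L i) : concatBlocks L B (blockStart L i + δ) = B i δ := by
  have inner : ∀ i δ, δ < L i → concatBlocks L B (blockStart L i + δ) = B i δ := by
    intro i δ hδ
    have hi : Nat.findGreatest (fun k => blockStart L k ≤ blockStart L i + δ)
        (blockStart L i + δ) = i := by
      refine Nat.findGreatest_eq_iff.mpr ⟨?_, fun _ => Nat.le_add_right _ _, fun k hik _ hk => ?_⟩
      · exact ((blockStart_strictMono hL).id_le i).trans (Nat.le_add_right _ _)
      · have := (blockStart_strictMono hL).monotone (Nat.succ_le_of_lt hik)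
        rw [blockStart_succ] at this
        omega
    simp only [concatBlocks, hi, Nat.add_sub_cancel_left]
  rcases hδ.lt_or_eq with hδ | rfl
  · exact inner i δ hδ
  · rw [← add_zero (blockStart L i + L i), ← blockStart_succ, inner _ 0 (hL _), hB]

lemma concatBlocks_rel (hL : ∀ i, 0 < L i) (hB : ∀ i, B i (L i) = B (i + 1) 0)
    {R : α → α → Prop} (hR : ∀ i δ, δ < L i → R (B i δ) (B i (δ + 1))) (m : ℕ) :
    R (concatBlocks L B m) (concatBlocks L B (m + 1)) := by
  obtain ⟨i, δ, hδ, rfl⟩ := exists_eq_blockStart_add hL m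
  rw [add_assoc, concatBlocks_blockStart_add hL hB hδ.le, concatBlocks_blockStart_add hL hB hδ]
  exact hR i δ hδ

end BlockConcat

lemma Monotone.eq_of_add_eq_add_of_lt_succ {a : ℕ → ℕ} (ha : Monotone a) {i i' δ δ' : ℕ}
    (h : a i + δ = a i' + δ') (hδ : a i + δ < a (i + 1)) (hδ' : a i' + δ' < a (i' + 1)) :
    i = i' := by
  rcases lt_trichotomy i i' with hlt | rfl | hlt
  · have := ha (show i + 1 ≤ i' from hlt); omega
  · rfl
  · have := ha (show i' + 1 ≤ i from hlt); omega

lemma Function.iterate_injOn_Iic_of_forall_lt_ne {α : Type*} {p : α → α} {x y : α} {m : ℕ}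
    (hm : p^[m] x = y) (hmin : ∀ i < m, p^[i] x ≠ y) : Set.InjOn (fun i => p^[i] x) (Set.Iic m) := by
  intro i hi i' hi' h
  by_contra hne
  wlog hlt : i < i' generalizing i i'
  · exact this hi' hi h.symm (Ne.symm hne) (by omega)
  simp only [Set.mem_Iic] at hi hi'
  refine hmin (m - i' + i) (by omega) ?_
  rw [Function.iterate_add_apply, show p^[i] x = p^[i'] x from h, ← Function.iterate_add_apply,
    Nat.sub_add_cancel hi', hm]

lemma exists_interlacing_subseq {c : ℕ → ℕ} (hc : Function.Injective c) :
    ∃ t : ℕ → ℕ, StrictMono t ∧ c (t 0) < c (t 1) ∧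
      ∀ i, c (t (i + 1)) ≤ c (t i + 1) ∧ c (t i + 1) < c (t (i + 2)) := by
  -- `W x` is the last index whose `c`-value is at most `x`.
  set W : ℕ → ℕ := fun x => sSup {t | c t ≤ x}
  have hbdd : ∀ x, BddAbove {t | c t ≤ x} := fun x => ((Set.finite_Iic x).preimage hc.injOn).bddAbove
  have hle : ∀ x t, c t ≤ x → t ≤ W x := fun x t h => le_csSup (hbdd x) h
  have hmem : ∀ x t, c t ≤ x → c (W x) ≤ x := fun x t h => Nat.sSup_mem ⟨t, h⟩ (hbdd x)
  have hgt : ∀ x t, W x < t → x < c t := fun x t h => lt_of_not_ge fun h' => (hle x t h').not_gt h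
  set t : ℕ → ℕ := fun i => (fun s => W (c (s + 1)))^[i] (W (c 0))
  have ht : ∀ i, t (i + 1) = W (c (t i + 1)) := fun i => Function.iterate_succ_apply' _ _ _
  have hmono : StrictMono t := strictMono_nat_of_lt_succ fun i => (ht i) ▸ hle _ _ le_rfl
  refine ⟨t, hmono, ?_, fun i => ⟨(ht i) ▸ hmem _ _ le_rfl, hgt _ _ ?_⟩⟩
  · exact (hmem (c 0) 0 le_rfl).trans_lt (hgt _ _ (hmono zero_lt_one))
  · rw [← ht]; exact hmono (Nat.lt_succ_self _)

namespace DGraph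

variable {V : Type u}

lemma Reaches.mem_verts {G : DGraph V} {v r : V} (h : G.Reaches v r) : v ∈ G.verts := by
  obtain ⟨_ | ⟨a, t⟩, ⟨hne, -, hmem, -⟩, hhead, -⟩ := h
  · exact absurd rfl hne
  · simp only [List.head?_cons, Option.some.injEq] at hhead
    exact hhead ▸ hmem a List.mem_cons_self

lemma isPathFrom_map_range {G : DGraph V} (g : ℕ → V) (m : ℕ) (hinj : Set.InjOn g (Set.Iic m))
    (hv : ∀ i ≤ m, g i ∈ G.verts) (he : ∀ i < m, (g i, g (i + 1)) ∈ G.edges) :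
    G.IsPathFrom (g 0) (g m) ((List.range (m + 1)).map g) := by
  refine ⟨⟨by simp, List.Nodup.map_on (fun x hx y hy => hinj ?_ ?_) List.nodup_range, ?_, ?_⟩,
    by simp [List.range_succ_eq_map], by simp [List.range_succ]⟩
  · simpa [Nat.lt_succ_iff] using hx
  · simpa [Nat.lt_succ_iff] using hy
  · intro x hx
    obtain ⟨i, hi, rfl⟩ := List.mem_map.mp hx
    exact hv i (Nat.lt_succ_iff.mp (List.mem_range.mp hi))
  · intro e he'
    obtain ⟨k, hk, rfl⟩ := List.mem_iff_getElem.mp he'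
    have hk' : k < m := by simpa using hk
    simpa [List.getElem_zip, List.getElem_tail] using he k hk'

lemma reaches_of_iterate_eq {G : DGraph V} {p : V → V} {x y : V} {m : ℕ} (hm : p^[m] x = y)
    (hmin : ∀ i < m, p^[i] x ≠ y) (hv : ∀ i ≤ m, p^[i] x ∈ G.verts)
    (he : ∀ i < m, (p^[i] x, p^[i + 1] x) ∈ G.edges) : G.Reaches x y :=
  hm ▸ ⟨_, isPathFrom_map_range (fun i => p^[i] x) m
    (Function.iterate_injOn_Iic_of_forall_lt_ne hm hmin) hv he⟩

noncomputable def distTo (D : DGraph V) (r v : V) : ℕ :=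
  sInf {k | ∃ l, D.IsPathFrom v r l ∧ l.length = k}

lemma exists_edge_distTo_lt {D : DGraph V} {r v : V} (h : D.Reaches v r) (hvr : v ≠ r) :
    ∃ w, (v, w) ∈ D.edges ∧ D.Reaches w r ∧ D.distTo r w < D.distTo r v := by
  obtain ⟨l, hl, hlen⟩ := Nat.sInf_mem (s := {k | ∃ l, D.IsPathFrom v r l ∧ l.length = k})
    (let ⟨l, hl⟩ := h; ⟨_, l, hl, rfl⟩)
  obtain ⟨⟨hne, hnd, hmem, hedge⟩, hhead, hlast⟩ := hl
  rcases l with _ | ⟨a, _ | ⟨w, t⟩⟩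
  · exact absurd rfl hne
  · simp only [List.head?_cons, List.getLast?_singleton, Option.some.injEq] at hhead hlast
    exact absurd (hhead ▸ hlast) hvr
  · simp only [List.head?_cons, Option.some.injEq] at hhead
    subst hhead
    have hw : D.IsPathFrom w r (w :: t) :=
      ⟨⟨List.cons_ne_nil _ _, (List.nodup_cons.mp hnd).2,
        fun x hx => hmem x (List.mem_cons_of_mem _ hx),
        fun e he => hedge e (List.mem_cons_of_mem _ he)⟩, rfl, by simpa using hlast⟩
    refine ⟨w, hedge _ List.mem_cons_self, ⟨_, hw⟩, ?_⟩
    calc D.distTo r w ≤ (w :: t).length := Nat.sInf_le ⟨_, hw, rfl⟩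
      _ < _ := by rw [distTo, ← hlen]; simp

def parentGraph (p : V → V) (S : Set V) (y : V) : DGraph V :=
  ⟨S, {e | e.1 ∈ S ∧ e.1 ≠ y ∧ e.2 = p e.1}⟩

lemma isInArborescence_parentGraph {p : V → V} {S : Set V} {y : V} (hy : y ∈ S)
    (hS : ∀ x ∈ S, x ≠ y → p x ∈ S) (hhit : ∀ x ∈ S, ∃ m, p^[m] x = y) :
    (parentGraph p S y).IsInArborescence y := by
  classical
  refine ⟨hy, fun e he => ⟨he.1, he.2.2 ▸ hS _ he.1 he.2.1⟩, fun w h => h.2.1 rfl,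
    fun v hv hvy => ⟨p v, ⟨hv, hvy, rfl⟩, fun w hw => hw.2.2⟩, fun x hx => ?_⟩
  have hmin : ∀ i < Nat.find (hhit x hx), p^[i] x ≠ y := fun i hi => Nat.find_min _ hi
  have hmem : ∀ i ≤ Nat.find (hhit x hx), p^[i] x ∈ S := by
    intro i
    induction i with
    | zero => exact fun _ => hx
    | succ i ih =>
      intro hi
      rw [Function.iterate_succ_apply']
      exact hS _ (ih (by omega)) (hmin i (by omega))
  exact reaches_of_iterate_eq (Nat.find_spec (hhit x hx)) hmin hmem
    fun i hi => ⟨hmem i hi.le, hmin i hi, Function.iterate_succ_apply' _ _ _⟩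

lemma parentGraph_subset {D : DGraph V} {p : V → V} {S : Set V} {y : V} (hS : S ⊆ D.verts)
    (hE : ∀ x ∈ S, x ≠ y → (x, p x) ∈ D.edges) : parentGraph p S y ⊆ D :=
  ⟨hS, by rintro ⟨x, z⟩ ⟨hx, hxy, h : z = p x⟩; exact h ▸ hE x hx hxy⟩

/-- `n ∈ rChildren p f j` when, following `p` from `f n`, the first vertex of the ray `range f`
reached is `f j`. -/
def rChildren (p : V → V) (f : ℕ → V) (j : ℕ) : Set ℕ :=
  {n | f n ≠ f j ∧ ∃ m, 0 < m ∧ p^[m] (f n) = f j ∧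
    ∀ i, 0 < i → i < m → p^[i] (f n) ∉ Set.range f}

def rDescendants (p : V → V) (f : ℕ → V) (j : ℕ) : Set ℕ := {n | ∃ m, p^[m] (f n) = f j}

variable {p : V → V} {f : ℕ → V}

lemma iterate_ne_of_forall_not_mem_range {n j m : ℕ} (hne : f n ≠ f j)
    (hint : ∀ i, 0 < i → i < m → p^[i] (f n) ∉ Set.range f) {i : ℕ} (hi : i < m) :
    p^[i] (f n) ≠ f j := by
  rcases i.eq_zero_or_pos with rfl | hpos
  · exact hne
  · exact fun h => hint i hpos hi ⟨j, h.symm⟩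

/-- The last vertex of `range f` before `f j` on the `p`-path from `f n` is an `rChild` of `f j`. -/
lemma exists_mem_rChildren_of_iterate_eq {n j k : ℕ} (hk : p^[k] (f n) = f j)
    (hmin : ∀ i < k, p^[i] (f n) ≠ f j) (hpos : 0 < k) :
    ∃ i < k, ∃ q ∈ rChildren p f j, p^[i] (f n) = f q := by
  classical
  set i := Nat.findGreatest (fun i => p^[i] (f n) ∈ Set.range f) (k - 1)
  have hik : i < k := (Nat.findGreatest_le _).trans_lt (by omega)
  obtain ⟨q, hq⟩ : p^[i] (f n) ∈ Set.range f :=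
    Nat.findGreatest_spec (P := fun i => p^[i] (f n) ∈ Set.range f) (Nat.zero_le _) ⟨n, rfl⟩
  have hlast : ∀ i', i < i' → i' ≤ k - 1 → p^[i'] (f n) ∉ Set.range f :=
    fun _ => Nat.findGreatest_is_greatest
  clear_value i
  refine ⟨i, hik, q, ⟨hq ▸ hmin i hik, k - i, by omega, ?_, fun i' h0 hi' => ?_⟩, hq.symm⟩
  · rw [hq, ← Function.iterate_add_apply, Nat.sub_add_cancel hik.le, hk]
  · rw [hq, ← Function.iterate_add_apply]
    exact hlast _ (by omega) (by omega)

lemma exists_mem_rChildren_rDescendants_infinite (hf : Function.Injective f) {j : ℕ}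
    (hj : (rDescendants p f j).Infinite) (hfin : (rChildren p f j).Finite) :
    ∃ q ∈ rChildren p f j, (rDescendants p f q).Infinite := by
  classical
  by_contra! h
  refine hj (((Set.finite_singleton j).union (hfin.biUnion h)).subset fun n hn => ?_)
  by_cases hnj : n = j
  · exact Or.inl hnj
  obtain ⟨i, -, q, hq, hiq⟩ := exists_mem_rChildren_of_iterate_eq (Nat.find_spec hn)
    (fun i hi => Nat.find_min hn hi)
    (Nat.pos_of_ne_zero fun h0 => hnj (hf (by simpa [h0] using Nat.find_spec hn)))
  exact Or.inr (Set.mem_biUnion hq ⟨i, hiq⟩)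

/-- König's lemma for the tree of `rChildren`. -/
lemma exists_rChildren_chain (hf : Function.Injective f) (hfin : ∀ j, (rChildren p f j).Finite)
    {j₀ : ℕ} (h₀ : (rDescendants p f j₀).Infinite) :
    ∃ q : ℕ → ℕ, ∀ k, q (k + 1) ∈ rChildren p f (q k) := by
  have step : ∀ j, ∃ q, (rDescendants p f j).Infinite →
      q ∈ rChildren p f j ∧ (rDescendants p f q).Infinite := fun j => by
    by_cases hj : (rDescendants p f j).Infinite
    · obtain ⟨q, hq⟩ := exists_mem_rChildren_rDescendants_infinite hf hj (hfin j)
      exact ⟨q, fun _ => hq⟩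
    · exact ⟨j, fun h => absurd h hj⟩
  choose F hF using step
  have hinf : ∀ k, (rDescendants p f (F^[k] j₀)).Infinite := by
    intro k
    induction k with
    | zero => exact h₀
    | succ k ih => rw [Function.iterate_succ_apply']; exact (hF _ ih).2
  exact ⟨fun k => F^[k] j₀, fun k => by
    simp only [Function.iterate_succ_apply']; exact (hF _ (hinf k)).1⟩

/-- An in-arborescence towards `r`, given by parent pointers, spanning the vertices that reach `r`. -/
structure InTreeMap (D : DGraph V) (r : V) where
  parent : V → V
  height : V → ℕ
  parent_root : parent r = r
  reaches_parent : ∀ v, D.Reaches v r → D.Reaches (parent v) r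
  edge_parent : ∀ v, D.Reaches v r → v ≠ r → (v, parent v) ∈ D.edges
  height_parent_lt : ∀ v, D.Reaches v r → v ≠ r → height (parent v) < height v

namespace InTreeMap

theorem nonempty (D : DGraph V) (r : V) : Nonempty (InTreeMap D r) := by
  classical
  have step : ∀ v, ∃ w, D.Reaches v r → v ≠ r →
      (v, w) ∈ D.edges ∧ D.Reaches w r ∧ D.distTo r w < D.distTo r v := fun v => by
    by_cases h : D.Reaches v r ∧ v ≠ r
    · obtain ⟨w, hw⟩ := exists_edge_distTo_lt h.1 h.2
      exact ⟨w, fun _ _ => hw⟩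
    · exact ⟨v, fun h1 h2 => absurd ⟨h1, h2⟩ h⟩
  choose w hw using step
  refine ⟨⟨fun v => if v = r then r else w v, D.distTo r, if_pos rfl, fun v hv => ?_,
    fun v hv hvr => ?_, fun v hv hvr => ?_⟩⟩
  · by_cases hvr : v = r
    · simpa [hvr] using hv
    · simpa [hvr] using (hw v hv hvr).2.1
  · simpa [hvr] using (hw v hv hvr).1
  · simpa [hvr] using (hw v hv hvr).2.2

variable {D : DGraph V} {r : V} (K : InTreeMap D r)

lemma reaches_iterate {v : V} (hv : D.Reaches v r) (m : ℕ) : D.Reaches (K.parent^[m] v) r := by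
  induction m with
  | zero => exact hv
  | succ m ih => rw [Function.iterate_succ_apply']; exact K.reaches_parent _ ih

lemma exists_iterate_eq_root {v : V} (hv : D.Reaches v r) : ∃ m, K.parent^[m] v = r := by
  induction hn : K.height v using Nat.strong_induction_on generalizing v with
  | _ n ih =>
    by_cases hvr : v = r
    · exact ⟨0, hvr⟩
    · obtain ⟨m, hm⟩ := ih _ (hn ▸ K.height_parent_lt v hv hvr) (K.reaches_parent v hv) rfl
      exact ⟨m + 1, hm⟩

lemma iterate_eq_root_of_le {v : V} {i m : ℕ} (h : K.parent^[i] v = r) (hi : i ≤ m) :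
    K.parent^[m] v = r := by
  rw [← Nat.sub_add_cancel hi, Function.iterate_add_apply, h, Function.iterate_fixed K.parent_root]

lemma iterate_ne_root {n j m i : ℕ} (hne : f n ≠ f j) (hm : K.parent^[m] (f n) = f j)
    (hint : ∀ i, 0 < i → i < m → K.parent^[i] (f n) ∉ Set.range f) (hi : i < m) :
    K.parent^[i] (f n) ≠ r := fun h =>
  iterate_ne_of_forall_not_mem_range hne hint hi (h.trans (hm ▸ K.iterate_eq_root_of_le h hi.le).symm)

theorem exists_inArborescence (hf : Function.Injective f) (hreach : ∀ n, D.Reaches (f n) r)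
    {j : ℕ} (hj : (rChildren K.parent f j).Infinite) :
    ∃ T : DGraph V, T ⊆ D ∧ T.IsInArborescence (f j) ∧
      (∀ v ∈ T.verts ∩ Set.range f, v = f j ∨ T.IsLeafOfInArb (f j) v) ∧
      (T.verts ∩ Set.range f).Infinite := by
  set N := rChildren K.parent f j
  choose! M _ hMj hMint using fun n (hn : n ∈ N) => hn.2
  set S := {x | ∃ n ∈ N, ∃ i ≤ M n, K.parent^[i] (f n) = x}
  have hlt : ∀ n ∈ N, ∀ i ≤ M n, K.parent^[i] (f n) ≠ f j → i < M n := fun n hn i hi hx =>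
    hi.lt_of_ne fun h => hx (h ▸ hMj n hn)
  have hS : ∀ x ∈ S, x ≠ f j → x ≠ r ∧ K.parent x ∈ S := by
    rintro _ ⟨n, hn, i, hi, rfl⟩ hx
    refine ⟨K.iterate_ne_root (hn.1) (hMj n hn) (hMint n hn) (hlt n hn i hi hx), n, hn, i + 1,
      hlt n hn i hi hx, Function.iterate_succ_apply' _ _ _⟩
  have hreachS : ∀ x ∈ S, D.Reaches x r := by
    rintro _ ⟨n, -, i, -, rfl⟩
    exact K.reaches_iterate (hreach n) i
  refine ⟨parentGraph K.parent S (f j),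
    parentGraph_subset (fun x hx => (hreachS x hx).mem_verts)
      fun x hx hxj => K.edge_parent x (hreachS x hx) (hS x hx hxj).1, ?_, ?_, ?_⟩
  · obtain ⟨n, hn⟩ := hj.nonempty
    refine isInArborescence_parentGraph ⟨n, hn, M n, le_rfl, hMj n hn⟩ (fun x hx hxj => (hS x hx hxj).2) ?_
    rintro _ ⟨n, hn, i, hi, rfl⟩
    exact ⟨M n - i, by rw [← Function.iterate_add_apply, Nat.sub_add_cancel hi, hMj n hn]⟩
  · rintro x ⟨hx, hxR⟩
    refine or_iff_not_imp_left.mpr fun hxj => ⟨hx, hxj, ?_⟩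
    rintro _ ⟨⟨n, hn, i, hi, rfl⟩, hu, hux⟩
    have hi' := hlt n hn i hi hu
    replace hux : K.parent^[i + 1] (f n) = x := (Function.iterate_succ_apply' _ _ _).trans hux.symm
    rcases (Nat.succ_le_of_lt hi').lt_or_eq with h | h
    · exact hMint n hn (i + 1) (Nat.succ_pos i) h (hux ▸ hxR)
    · exact hxj (hux ▸ (show i + 1 = M n from h) ▸ hMj n hn)
  · refine (hj.image hf.injOn).mono ?_
    rintro _ ⟨n, hn, rfl⟩
    exact ⟨⟨n, hn, 0, Nat.zero_le _, rfl⟩, n, rfl⟩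

def IsTreeRay (s : ℕ → V) : Prop :=
  ∀ m, s m = K.parent (s (m + 1)) ∧ s (m + 1) ≠ r ∧ D.Reaches (s (m + 1)) r

theorem exists_isTreeRay_of_chain (hreach : ∀ n, D.Reaches (f n) r) {q : ℕ → ℕ}
    (hq : ∀ k, q (k + 1) ∈ rChildren K.parent f (q k)) :
    ∃ s, K.IsTreeRay s ∧ {m | s m ∈ Set.range f}.Infinite := by
  choose hne M hM0 hMq hMint using hq
  set B : ℕ → ℕ → V := fun k δ => K.parent^[M k - δ] (f (q (k + 1)))
  have hB : ∀ k, B k (M k) = B (k + 1) 0 := fun k => by simp [B, hMq]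
  refine ⟨concatBlocks M B, concatBlocks_rel (R := fun x y => x = K.parent y ∧ y ≠ r ∧ D.Reaches y r)
    hM0 hB fun k δ hδ => ⟨?_, ?_, ?_⟩, ?_⟩
  · simp only [B]
    rw [← Function.iterate_succ_apply' K.parent]
    congr 1
    omega
  · exact K.iterate_ne_root (hne k) (hMq k) (hMint k) (by omega)
  · exact K.reaches_iterate (hreach _) _
  · refine (Set.infinite_range_of_injective (blockStart_strictMono hM0).injective).mono ?_
    rintro _ ⟨k, rfl⟩
    refine ⟨q k, ?_⟩
    rw [← add_zero (blockStart M k), concatBlocks_blockStart_add hM0 hB (Nat.zero_le _)]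
    simp [B, hMq]

variable {K}

lemma IsTreeRay.injective {s : ℕ → V} (hs : K.IsTreeRay s) : Function.Injective s :=
  (strictMono_nat_of_lt_succ fun m => (hs m).1 ▸
    K.height_parent_lt _ (hs m).2.2 (hs m).2.1 : StrictMono fun m => K.height (s m)).injective.of_comp

lemma IsTreeRay.inRay_subset {s : ℕ → V} (hs : K.IsTreeRay s) : inRay s ⊆ D := by
  refine ⟨?_, ?_⟩
  · rintro _ ⟨m, rfl⟩
    rw [(hs m).1]
    exact (K.reaches_parent _ (hs m).2.2).mem_verts
  · rintro _ ⟨m, rfl⟩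
    rw [(hs m).1]
    exact K.edge_parent _ (hs m).2.2 (hs m).2.1

end InTreeMap

/-- Paths `P i` in `D` of length `J i` from `f (S i)` back to `f (E i)`, indexed from their end,
with interiors disjoint from each other and from `R = range f`, placed so that
`E 0 < E 1 ≤ S 0 < E 2 ≤ S 1 < E 3 ≤ ⋯`. -/
structure InterlacedJumps (D : DGraph V) (f : ℕ → V) where
  E : ℕ → ℕ
  S : ℕ → ℕ
  J : ℕ → ℕ
  P : ℕ → ℕ → V
  J_pos : ∀ i, 0 < J i
  P_zero : ∀ i, P i 0 = f (E i)
  P_J : ∀ i, P i (J i) = f (S i)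
  P_edge : ∀ i δ, δ < J i → (P i (δ + 1), P i δ) ∈ D.edges
  P_mem : ∀ i δ, δ ≤ J i → P i δ ∈ D.verts
  P_not_mem_range : ∀ i δ, 0 < δ → δ < J i → P i δ ∉ Set.range f
  P_inj : ∀ i δ i' δ', 0 < δ → δ < J i → 0 < δ' → δ' < J i' → P i δ = P i' δ' → i = i' ∧ δ = δ'
  E_zero_lt_one : E 0 < E 1
  E_succ_le_S : ∀ i, E (i + 1) ≤ S i
  S_lt_E : ∀ i, S i < E (i + 2)

namespace InterlacedJumps

variable {D : DGraph V} {f : ℕ → V} (F : InterlacedJumps D f)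

def rideLen (i : ℕ) : ℕ := F.S i - F.E (i + 1)

def blockLen (i : ℕ) : ℕ := F.J i + F.rideLen i

/-- Block `i` of the knit ray, listed away from its root: `P i` from `f (E i)` to `f (S i)`, then
`R` backwards from `f (S i)` to `f (E (i + 1))`. -/
def block (i δ : ℕ) : V := if δ < F.J i then F.P i δ else f (F.S i + F.J i - δ)

noncomputable def ray : ℕ → V := concatBlocks F.blockLen F.block

lemma E_strictMono : StrictMono F.E := strictMono_nat_of_lt_succ fun i => by
  rcases i with _ | i
  · exact F.E_zero_lt_one
  · exact (F.E_succ_le_S i).trans_lt (F.S_lt_E i)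

lemma blockLen_pos (i : ℕ) : 0 < F.blockLen i := Nat.add_pos_left (F.J_pos i) _

lemma blockStart_succ_eq (i : ℕ) :
    blockStart F.blockLen (i + 1) = blockStart F.blockLen i + F.J i + F.rideLen i := by
  rw [blockStart_succ, blockLen, add_assoc]

lemma ray_blockStart_add {i δ : ℕ} (hδ : δ ≤ F.blockLen i) :
    F.ray (blockStart F.blockLen i + δ) = F.block i δ := by
  refine concatBlocks_blockStart_add F.blockLen_pos (fun i => ?_) hδ
  have := F.E_succ_le_S i
  rw [block, block, if_neg (by unfold blockLen; omega), if_pos (F.J_pos _), F.P_zero]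
  congr 1
  unfold blockLen rideLen
  omega

lemma ray_jump {i δ : ℕ} (hδ : δ ≤ F.J i) : F.ray (blockStart F.blockLen i + δ) = F.P i δ := by
  rw [F.ray_blockStart_add (by unfold blockLen; omega), block]
  split_ifs with h
  · rfl
  · rw [show δ = F.J i by omega, F.P_J, Nat.add_sub_cancel]

lemma ray_ride {i d : ℕ} (hd : d ≤ F.rideLen i) :
    F.ray (blockStart F.blockLen i + F.J i + d) = f (F.S i - d) := by
  rw [add_assoc, F.ray_blockStart_add (by unfold blockLen; omega), block, if_neg (by omega)]
  congr 1
  omega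

lemma ray_zero : F.ray 0 = f (F.E 0) := by
  simpa [F.P_zero] using F.ray_jump (i := 0) (Nat.zero_le _)

lemma ray_cases (m : ℕ) : m = 0 ∨ (∃ i δ, 0 < δ ∧ δ < F.J i ∧ m = blockStart F.blockLen i + δ) ∨
    ∃ i d, d ≤ F.rideLen i ∧ m = blockStart F.blockLen i + F.J i + d := by
  rcases m with _ | m
  · exact Or.inl rfl
  obtain ⟨i, δ, hδ, rfl⟩ := exists_eq_blockStart_add F.blockLen_pos m
  by_cases h : δ + 1 < F.J i
  · exact Or.inr (Or.inl ⟨i, δ + 1, by omega, h, by ring⟩)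
  · exact Or.inr (Or.inr ⟨i, δ + 1 - F.J i, by unfold blockLen at hδ; omega, by omega⟩)

lemma ray_edge (hR : outRay f ⊆ D) (m : ℕ) : (F.ray (m + 1), F.ray m) ∈ D.edges := by
  obtain ⟨i, δ, hδ, rfl⟩ := exists_eq_blockStart_add F.blockLen_pos m
  by_cases h : δ < F.J i
  · rw [add_assoc, F.ray_jump h, F.ray_jump h.le]
    exact F.P_edge i δ h
  · obtain ⟨d, rfl⟩ := Nat.exists_eq_add_of_le (not_lt.mp h)
    have hd : d < F.rideLen i := by unfold blockLen at hδ; omega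
    rw [← add_assoc, F.ray_ride hd.le, add_assoc _ d, F.ray_ride hd,
      show F.S i - d = F.S i - (d + 1) + 1 by unfold rideLen at hd; omega]
    exact hR.2 ⟨_, rfl⟩

lemma ray_mem (hR : outRay f ⊆ D) (m : ℕ) : F.ray m ∈ D.verts := by
  rcases F.ray_cases m with rfl | ⟨i, δ, -, hδ, rfl⟩ | ⟨i, d, hd, rfl⟩
  · exact F.ray_zero ▸ hR.1 ⟨_, rfl⟩
  · exact F.ray_jump hδ.le ▸ F.P_mem i δ hδ.le
  · exact F.ray_ride hd ▸ hR.1 ⟨_, rfl⟩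

lemma E_zero_lt_sub {i d : ℕ} (hd : d ≤ F.rideLen i) : F.E 0 < F.S i - d := by
  have := F.E_strictMono (show 0 < i + 1 by omega)
  unfold rideLen at hd
  have := F.E_succ_le_S i
  omega

lemma S_lt_sub {i i' d' : ℕ} (hi : i < i') (hd' : d' ≤ F.rideLen i') : F.S i < F.S i' - d' := by
  have := F.E_strictMono.monotone (show i + 2 ≤ i' + 1 by omega)
  have := F.S_lt_E i
  have := F.E_succ_le_S i'
  unfold rideLen at hd'
  omega

lemma eq_of_sub_eq_sub {i i' d d' : ℕ} (hd : d ≤ F.rideLen i) (hd' : d' ≤ F.rideLen i')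
    (h : F.S i - d = F.S i' - d') : i = i' ∧ d = d' := by
  rcases lt_trichotomy i i' with hi | rfl | hi
  · exact absurd h (by have := F.S_lt_sub hi hd'; omega)
  · unfold rideLen at hd hd'
    exact ⟨rfl, by omega⟩
  · exact absurd h (by have := F.S_lt_sub hi hd; omega)

lemma ray_jump_ne {i δ : ℕ} (h0 : 0 < δ) (hδ : δ < F.J i) (x : ℕ) :
    F.ray (blockStart F.blockLen i + δ) ≠ f x := fun h =>
  F.P_not_mem_range i δ h0 hδ ⟨x, h.symm.trans (F.ray_jump hδ.le)⟩

theorem ray_injective (hf : Function.Injective f) : Function.Injective F.ray := by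
  intro m m' h
  rcases F.ray_cases m with rfl | ⟨i, δ, h0, hδ, rfl⟩ | ⟨i, d, hd, rfl⟩ <;>
    rcases F.ray_cases m' with rfl | ⟨i', δ', h0', hδ', rfl⟩ | ⟨i', d', hd', rfl⟩
  · rfl
  · exact absurd (h.symm.trans F.ray_zero) (F.ray_jump_ne h0' hδ' _)
  · rw [F.ray_zero, F.ray_ride hd'] at h
    exact absurd (hf h) (F.E_zero_lt_sub hd').ne
  · exact absurd (h.trans F.ray_zero) (F.ray_jump_ne h0 hδ _)
  · rw [F.ray_jump hδ.le, F.ray_jump hδ'.le] at h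
    obtain ⟨rfl, rfl⟩ := F.P_inj _ _ _ _ h0 hδ h0' hδ' h
    rfl
  · exact absurd (h.trans (F.ray_ride hd')) (F.ray_jump_ne h0 hδ _)
  · rw [F.ray_zero, F.ray_ride hd] at h
    exact absurd (hf h) (F.E_zero_lt_sub hd).ne'
  · exact absurd (h.symm.trans (F.ray_ride hd)) (F.ray_jump_ne h0' hδ' _)
  · rw [F.ray_ride hd, F.ray_ride hd'] at h
    obtain ⟨rfl, rfl⟩ := F.eq_of_sub_eq_sub hd hd' (hf h)
    rfl

theorem knit_ray : Knit (fun k => f (F.E 0 + k)) F.ray := by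
  set A := blockStart F.blockLen
  have hA : ∀ i, A (i + 1) = A i + F.J i + F.rideLen i := F.blockStart_succ_eq
  have hE : ∀ i, F.E 0 < F.E (i + 1) := fun i => F.E_strictMono (Nat.succ_pos i)
  have hgap : ∀ i m, A i < m → m < A i + F.J i → F.ray m ∉ Set.range fun k => f (F.E 0 + k) := by
    rintro i m h1 h2 ⟨k, hk⟩
    obtain ⟨δ, rfl⟩ := Nat.exists_eq_add_of_lt h1
    exact F.ray_jump_ne (i := i) (δ := δ + 1) (Nat.succ_pos δ) (by omega) _ hk.symm
  refine ⟨by simp [F.ray_zero], fun i => F.E (i + 1) - F.E 0, fun i => F.S i - F.E 0,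
    fun i => A (i + 1), fun i => A i + F.J i, fun i => ?_, fun i => ?_, fun i => ?_,
    fun i k hk => ?_, fun i m h1 h2 => hgap (i + 1) m h1 h2,
    fun m h1 h2 => hgap 0 m (by simpa [A] using h1) h2⟩
  · have := F.E_succ_le_S i
    have : F.S i < F.E (i + 1 + 1) := F.S_lt_E i
    have := hE i
    have := hE (i + 1)
    dsimp only
    omega
  · have := F.J_pos i
    have := F.J_pos (i + 1)
    dsimp only
    rw [hA]
    omega
  · have := F.E_succ_le_S i
    have := hE i
    simp only [hA, rideLen]
    omega
  · have := F.E_succ_le_S i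
    have := hE i
    simp only at hk ⊢
    rw [show A (i + 1) - k = A i + F.J i + (F.rideLen i - k) by rw [hA]; unfold rideLen; omega,
      F.ray_ride (Nat.sub_le _ _)]
    congr 1
    unfold rideLen
    omega

theorem nonempty_of_inRay {s : ℕ → V} (hs : Function.Injective s) (hsD : inRay s ⊆ D)
    (hinf : {m | s m ∈ Set.range f}.Infinite) : Nonempty (InterlacedJumps D f) := by
  set pos := Nat.nth fun m => s m ∈ Set.range f
  have hpos : StrictMono pos := Nat.nth_strictMono hinf
  have hgap : ∀ t m, pos t < m → m < pos (t + 1) → s m ∉ Set.range f := fun t m h1 h2 h =>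
    (Nat.le_nth_of_lt_nth_succ h2 h).not_gt h1
  choose c hc using Nat.nth_mem_of_infinite hinf
  have hc_inj : Function.Injective c := fun t t' h =>
    hpos.injective (hs (by rw [← hc, ← hc, h]))
  obtain ⟨ts, hts, h01, hts'⟩ := exists_interlacing_subseq hc_inj
  have hmono : Monotone fun i => pos (ts i) := (hpos.comp hts).monotone
  have hnext : ∀ i, pos (ts i + 1) ≤ pos (ts (i + 1)) := fun i => hpos.monotone (hts i.lt_succ_self)
  have hlt : ∀ i, pos (ts i) < pos (ts i + 1) := fun i => hpos (Nat.lt_succ_self _)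
  refine ⟨{
    E := fun i => c (ts i)
    S := fun i => c (ts i + 1)
    J := fun i => pos (ts i + 1) - pos (ts i)
    P := fun i δ => s (pos (ts i) + δ)
    J_pos := fun i => by have := hlt i; omega
    P_zero := fun i => (hc _).symm
    P_J := fun i => by rw [Nat.add_sub_cancel' (hlt i).le, hc]
    P_edge := fun i δ _ => hsD.2 ⟨_, rfl⟩
    P_mem := fun i δ _ => hsD.1 ⟨_, rfl⟩
    P_not_mem_range := fun i δ h0 hδ => hgap (ts i) _ (by omega) (by omega)
    P_inj := fun i δ i' δ' _ hδ _ hδ' h => ?_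
    E_zero_lt_one := h01
    E_succ_le_S := fun i => (hts' i).1
    S_lt_E := fun i => (hts' i).2 }⟩
  have heq := hs h
  obtain rfl := hmono.eq_of_add_eq_add_of_lt_succ heq (by have := hnext i; omega)
    (by have := hnext i'; omega)
  exact ⟨rfl, by omega⟩

end InterlacedJumps

theorem exists_knit_of_inRay {D : DGraph V} {f : ℕ → V} (hf : Function.Injective f)
    (hR : outRay f ⊆ D) {s : ℕ → V} (hs : Function.Injective s) (hsD : inRay s ⊆ D)
    (hinf : {m | s m ∈ Set.range f}.Infinite) :
    ∃ n₀ : ℕ, ∃ g : ℕ → V, Function.Injective g ∧ g 0 = f n₀ ∧ inRay g ⊆ D ∧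
      Knit (fun k => f (n₀ + k)) g :=
  let ⟨F⟩ := InterlacedJumps.nonempty_of_inRay hs hsD hinf
  ⟨F.E 0, F.ray, F.ray_injective hf, F.ray_zero,
    ⟨by rintro _ ⟨m, rfl⟩; exact F.ray_mem hR m, by rintro _ ⟨m, rfl⟩; exact F.ray_edge hR m⟩,
    F.knit_ray⟩

end DGraph

/-- Let `D` be a strongly connected directed graph containing
an out-ray `R` (with vertices `f 0, f 1, …`).  Then there is a vertex
`r = f n₀` of `R` such that either there is an in-arborescence `T` rooted at
`r` in `D` that intersects `V(R)` exactly in `r` and in infinitely many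
leaves of `T`, or there is an in-ray `S` rooted at `r` in `D` that is knit
with the final segment `rR`. -/
theorem in_tree_or_knit_ray {V : Type u} (D : DGraph V)
    (hD : D.StronglyConnected) (f : ℕ → V) (hf : Function.Injective f)
    (hR : DGraph.outRay f ⊆ D) :
    ∃ n₀ : ℕ,
      (∃ T : DGraph V, T ⊆ D ∧ DGraph.IsInArborescence T (f n₀) ∧
        (∀ v ∈ T.verts ∩ Set.range f, v = f n₀ ∨ DGraph.IsLeafOfInArb T (f n₀) v) ∧
        (T.verts ∩ Set.range f).Infinite) ∨
      (∃ g : ℕ → V, Function.Injective g ∧ g 0 = f n₀ ∧ DGraph.inRay g ⊆ D ∧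
        DGraph.Knit (fun k => f (n₀ + k)) g) := by
  have hreach : ∀ n, D.Reaches (f n) (f 0) := fun n => hD _ (hR.1 ⟨n, rfl⟩) _ (hR.1 ⟨0, rfl⟩)
  obtain ⟨K⟩ := DGraph.InTreeMap.nonempty D (f 0)
  by_cases h : ∃ j, (DGraph.rChildren K.parent f j).Infinite
  · obtain ⟨j, hj⟩ := h
    exact ⟨j, Or.inl (K.exists_inArborescence hf hreach hj)⟩
  simp only [not_exists, Set.not_infinite] at h
  have hroot : (DGraph.rDescendants K.parent f 0).Infinite := by
    have : DGraph.rDescendants K.parent f 0 = Set.univ :=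
      Set.eq_univ_of_forall fun n => K.exists_iterate_eq_root (hreach n)
    exact this ▸ Set.infinite_univ
  obtain ⟨q, hq⟩ := DGraph.exists_rChildren_chain hf h hroot
  obtain ⟨s, hs, hinf⟩ := K.exists_isTreeRay_of_chain hreach hq
  obtain ⟨n₀, hn₀⟩ := DGraph.exists_knit_of_inRay hf hR hs.injective hs.inRay_subset hinf
  exact ⟨n₀, Or.inr hn₀⟩
end
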